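/- arXiv:2404.17467 — 6 statements merged into one kernel-verified Lean document; each statement's English description precedes it below -/
import Mathlib

section
/- If a graph H has a stable involution (an automorphism φ of H with a partition V(H) = L ∪ R ∪ F where F is a vertex cut separating L and R, φ swaps L and R, φ fixes F pointwise, and F contains no edges of H), then for every symmetric bounded measurable kernel W : [0,1]² → ℝ, the homomorphism density satisfies t_H(W) ≥ t_{H[L∪F]}(W)², and in particular t_H(W) ≥ 0. -/
open MeasureTheory
open scoped Classical

/-- The homomorphism density of a finite simple graph `H` in a symmetric kernel
`W : ℝ → ℝ → ℝ`, integrating over `[0,1]^{V(H)}`. -/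
noncomputable def graphDensity {V : Type} [Fintype V] (H : SimpleGraph V)
    (W : ℝ → ℝ → ℝ) (hW : ∀ a b, W a b = W b a) : ℝ :=
  ∫ x in (Set.univ.pi fun _ : V => Set.Icc (0 : ℝ) 1),
    ∏ e ∈ (Set.toFinite H.edgeSet).toFinset,
      Sym2.lift ⟨fun a b => W (x a) (x b), fun a b => hW (x a) (x b)⟩ e

noncomputable def mu1 : Measure ℝ := volume.restrict (Set.Icc 0 1)

instance : IsProbabilityMeasure mu1 := ⟨by simp [mu1, Real.volume_Icc]⟩

lemma restrict_pi_eq {ι : Type} [Fintype ι] :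
    (volume : Measure (ι → ℝ)).restrict (Set.univ.pi fun _ => Set.Icc (0:ℝ) 1)
      = Measure.pi fun _ : ι => mu1 := by
  refine (Measure.pi_eq fun s hs => ?_).symm
  rw [Measure.restrict_apply (MeasurableSet.univ_pi hs), ← Set.pi_inter_distrib]
  rw [show (volume : Measure (ι → ℝ)) = Measure.pi fun _ => volume from rfl, Measure.pi_pi]
  simp [mu1, Measure.restrict_apply (hs _)]

lemma meas_edge_prod {ι : Type} (W : ℝ → ℝ → ℝ) (hW : ∀ a b, W a b = W b a)
    (hmeas : Measurable (Function.uncurry W)) (Es : Finset (Sym2 ι)) :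
    Measurable fun x : ι → ℝ =>
      ∏ e ∈ Es, Sym2.lift ⟨fun a b => W (x a) (x b), fun a b => hW (x a) (x b)⟩ e := by
  refine Finset.measurable_prod _ fun e _ => ?_
  induction e using Sym2.ind with
  | _ a b =>
    simp only [Sym2.lift_mk]
    exact hmeas.comp ((measurable_pi_apply a).prodMk (measurable_pi_apply b) :
      Measurable fun x : ι → ℝ => (x a, x b))

lemma abs_edge_prod_le {ι : Type} (W : ℝ → ℝ → ℝ) (hW : ∀ a b, W a b = W b a)
    {C : ℝ} (hC : ∀ x y, |W x y| ≤ C) (Es : Finset (Sym2 ι)) (x : ι → ℝ) :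
    |∏ e ∈ Es, Sym2.lift ⟨fun a b => W (x a) (x b), fun a b => hW (x a) (x b)⟩ e|
      ≤ C ^ Es.card := by
  rw [Finset.abs_prod]
  calc ∏ e ∈ Es, |Sym2.lift ⟨fun a b => W (x a) (x b), fun a b => hW (x a) (x b)⟩ e|
      ≤ ∏ _e ∈ Es, C := by
        refine Finset.prod_le_prod (fun _ _ => abs_nonneg _) fun e _ => ?_
        induction e using Sym2.ind with
        | _ a b => simpa using hC (x a) (x b)
    _ = C ^ Es.card := by rw [Finset.prod_const]

lemma sq_int_le {α : Type} [MeasurableSpace α] (μ : Measure α) [IsProbabilityMeasure μ]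
    (A : α → ℝ) (hA : Measurable A) {D : ℝ} (hD : ∀ y, |A y| ≤ D) :
    (∫ y, A y ∂μ)^2 ≤ ∫ y, (A y)^2 ∂μ := by
  have hint : Integrable A μ :=
    ⟨hA.aestronglyMeasurable, HasFiniteIntegral.of_bounded (C := D) (ae_of_all _ hD)⟩
  have hint2 : Integrable (fun y => (A y)^2) μ :=
    ⟨(hA.pow_const 2).aestronglyMeasurable,
      HasFiniteIntegral.of_bounded (C := D^2) (ae_of_all _ fun y => by
        have : |A y ^ 2| ≤ D ^ 2 := by
          rw [abs_pow]; exact pow_le_pow_left₀ (abs_nonneg _) (hD y) 2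
        simpa [Real.norm_eq_abs] using this)⟩
  set c := ∫ y, A y ∂μ with hc
  have expand : ∫ y, (A y - c)^2 ∂μ = (∫ y, (A y)^2 ∂μ) - c^2 := by
    have h1 : ∀ y, (A y - c)^2 = ((A y)^2 - (2*c) * A y) + c^2 := fun y => by ring
    simp_rw [h1]
    have i3 : Integrable (fun y => A y ^ 2 - 2 * c * A y) μ := hint2.sub (hint.const_mul (2*c))
    rw [integral_add i3 (integrable_const _),
      integral_sub hint2 (hint.const_mul (2*c)), MeasureTheory.integral_const_mul, integral_const]
    simp [← hc]; ring
  have h0 : 0 ≤ ∫ y, (A y - c)^2 ∂μ := integral_nonneg fun y => sq_nonneg _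
  linarith [expand ▸ h0]

lemma piCongrLeft_const_apply {ι κ : Type} (e : ι ≃ κ) (g : ι → ℝ) (a : κ) :
    (MeasurableEquiv.piCongrLeft (fun _ : κ => ℝ) e) g a = g (e.symm a) := by
  conv_lhs => rw [← e.apply_symm_apply a]
  exact Equiv.piCongrLeft_apply_apply _ _ _ _

set_option maxHeartbeats 2000000 in
/-- If `H` has a stable involution, then `t_H(W) ≥ t_{H[L∪F]}(W)² ≥ 0` for every
symmetric bounded measurable kernel `W`. -/
theorem stmt0 {V : Type} [Fintype V] [DecidableEq V] (H : SimpleGraph V)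
    (φ : H ≃g H) (L R F : Finset V)
    (hLR : Disjoint L R) (hLF : Disjoint L F) (hRF : Disjoint R F)
    (hcover : L ∪ R ∪ F = Finset.univ)
    (hcut : ∀ u ∈ L, ∀ v ∈ R, ¬ H.Adj u v)
    (hφLR : ∀ v ∈ L, φ v ∈ R) (hφRL : ∀ v ∈ R, φ v ∈ L)
    (hfix : ∀ v ∈ F, φ v = v)
    (hstable : ∀ u ∈ F, ∀ v ∈ F, ¬ H.Adj u v)
    (W : ℝ → ℝ → ℝ) (hsym : ∀ a b, W a b = W b a)
    (hmeas : Measurable (Function.uncurry W))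
    (hbdd : ∃ C, ∀ x y, |W x y| ≤ C) :
    graphDensity (H.induce (↑(L ∪ F) : Set V)) W hsym ^ 2 ≤ graphDensity H W hsym ∧
      0 ≤ graphDensity H W hsym := by
  obtain ⟨C, hC⟩ := hbdd
  have hC0 : (0:ℝ) ≤ C := le_trans (abs_nonneg _) (hC 0 0)
  -- membership basics
  have hmem3 : ∀ v : V, v ∈ L ∨ v ∈ R ∨ v ∈ F := by
    intro v
    have : v ∈ L ∪ R ∪ F := hcover ▸ Finset.mem_univ v
    simpa [Finset.mem_union, or_assoc] using this
  have hLnF : ∀ v ∈ L, v ∉ F := fun v hv => Finset.disjoint_left.1 hLF hv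
  have hRnF : ∀ v ∈ R, v ∉ F := fun v hv => Finset.disjoint_left.1 hRF hv
  have hLnR : ∀ v ∈ L, v ∉ R := fun v hv => Finset.disjoint_left.1 hLR hv
  have hmemR : ∀ v : V, v ∉ F → v ∉ L → v ∈ R := by
    intro v h1 h2; rcases hmem3 v with h|h|h <;> tauto
  -- subtypes
  set TF := {v : V // v ∈ F} with hTF
  set TL := {v : V // v ∈ L} with hTL
  set TR := {v : V // v ∈ R} with hTR
  letI iTF : Fintype TF := Subtype.fintype _
  letI iTL : Fintype TL := Subtype.fintype _
  letI iTR : Fintype TR := Subtype.fintype _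
  set μF : Measure (TF → ℝ) := Measure.pi fun _ => mu1 with hμF
  set μL : Measure (TL → ℝ) := Measure.pi fun _ => mu1 with hμL
  set μR : Measure (TR → ℝ) := Measure.pi fun _ => mu1 with hμR
  -- edge sets
  set E : Finset (Sym2 V) := (Set.toFinite H.edgeSet).toFinset with hE
  set EL : Finset (Sym2 V) := E.filter (fun e => ∀ v ∈ e, v ∈ L ∪ F) with hEL
  set ER : Finset (Sym2 V) := E.filter (fun e => ∀ v ∈ e, v ∈ R ∪ F) with hER
  have hmemE : ∀ a b : V, s(a,b) ∈ E ↔ H.Adj a b := by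
    intro a b; rw [hE, Set.Finite.mem_toFinset, SimpleGraph.mem_edgeSet]
  have hmemEL : ∀ a b : V, s(a,b) ∈ EL ↔ H.Adj a b ∧ (a ∈ L ∪ F ∧ b ∈ L ∪ F) := by
    intro a b
    rw [hEL, Finset.mem_filter, hmemE]
    constructor
    · rintro ⟨h1, h2⟩
      exact ⟨h1, h2 a (by simp), h2 b (by simp)⟩
    · rintro ⟨h1, h2, h3⟩
      refine ⟨h1, fun v hv => ?_⟩
      rcases Sym2.mem_iff.1 hv with rfl|rfl <;> assumption
  have hmemER : ∀ a b : V, s(a,b) ∈ ER ↔ H.Adj a b ∧ (a ∈ R ∪ F ∧ b ∈ R ∪ F) := by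
    intro a b
    rw [hER, Finset.mem_filter, hmemE]
    constructor
    · rintro ⟨h1, h2⟩
      exact ⟨h1, h2 a (by simp), h2 b (by simp)⟩
    · rintro ⟨h1, h2, h3⟩
      refine ⟨h1, fun v hv => ?_⟩
      rcases Sym2.mem_iff.1 hv with rfl|rfl <;> assumption
  have hEdisj : Disjoint EL ER := by
    rw [Finset.disjoint_left]
    intro e heL heR
    induction e using Sym2.ind with
    | _ a b =>
      obtain ⟨hadj, haL, hbL⟩ := (hmemEL a b).1 heL
      obtain ⟨-, haR, hbR⟩ := (hmemER a b).1 heR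
      have haF : a ∈ F := by
        rcases Finset.mem_union.1 haL with h|h
        · rcases Finset.mem_union.1 haR with h'|h'
          · exact absurd h' (hLnR a h)
          · exact h'
        · exact h
      have hbF : b ∈ F := by
        rcases Finset.mem_union.1 hbL with h|h
        · rcases Finset.mem_union.1 hbR with h'|h'
          · exact absurd h' (hLnR b h)
          · exact h'
        · exact h
      exact hstable a haF b hbF hadj
  have hEunion : EL ∪ ER = E := by
    apply Finset.Subset.antisymm
    · intro e he
      rcases Finset.mem_union.1 he with h|h
      · exact Finset.filter_subset _ _ h
      · exact Finset.filter_subset _ _ h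
    · intro e he
      induction e using Sym2.ind with
      | _ a b =>
        have hadj : H.Adj a b := (hmemE a b).1 he
        rw [Finset.mem_union, hmemEL, hmemER]
        rcases hmem3 a with ha|ha|ha <;> rcases hmem3 b with hb|hb|hb
        · exact Or.inl ⟨hadj, by simp [ha], by simp [hb]⟩
        · exact absurd hadj (hcut a ha b hb)
        · exact Or.inl ⟨hadj, by simp [ha], by simp [hb]⟩
        · exact absurd hadj.symm (hcut b hb a ha)
        · exact Or.inr ⟨hadj, by simp [ha], by simp [hb]⟩
        · exact Or.inr ⟨hadj, by simp [ha], by simp [hb]⟩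
        · exact Or.inl ⟨hadj, by simp [ha], by simp [hb]⟩
        · exact Or.inr ⟨hadj, by simp [ha], by simp [hb]⟩
        · exact absurd hadj (hstable a ha b hb)
  -- partial placement maps
  set ΦL : (TF → ℝ) → (TL → ℝ) → (V → ℝ) := fun y u v =>
    if h : v ∈ F then y ⟨v, h⟩ else if h' : v ∈ L then u ⟨v, h'⟩ else 0 with hΦL
  set ΦR : (TF → ℝ) → (TR → ℝ) → (V → ℝ) := fun y w v =>
    if h : v ∈ F then y ⟨v, h⟩ else if h' : v ∈ R then w ⟨v, h'⟩ else 0 with hΦR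
  set f : (TF → ℝ) → (TL → ℝ) → ℝ := fun y u =>
    ∏ e ∈ EL, Sym2.lift ⟨fun a b => W (ΦL y u a) (ΦL y u b),
      fun a b => hsym (ΦL y u a) (ΦL y u b)⟩ e with hf
  set g : (TF → ℝ) → (TR → ℝ) → ℝ := fun y w =>
    ∏ e ∈ ER, Sym2.lift ⟨fun a b => W (ΦR y w a) (ΦR y w b),
      fun a b => hsym (ΦR y w a) (ΦR y w b)⟩ e with hg
  set A : (TF → ℝ) → ℝ := fun y => ∫ u, f y u ∂μL with hA
  -- measurable equivs
  set Fc := {v : V // v ∉ F} with hFc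
  letI iFc : Fintype Fc := Subtype.fintype _
  set FcL := {w : Fc // (w : V) ∈ L} with hFcL
  set FcR := {w : Fc // ¬ (w : V) ∈ L} with hFcR
  letI iFcL : Fintype FcL := Subtype.fintype _
  letI iFcR : Fintype FcR := Subtype.fintype _
  set e1 : (V → ℝ) ≃ᵐ (TF → ℝ) × (Fc → ℝ) :=
    MeasurableEquiv.piEquivPiSubtypeProd (fun _ : V => ℝ) (· ∈ F) with he1
  have mp1 : MeasurePreserving e1 (Measure.pi fun _ : V => mu1) (μF.prod (Measure.pi fun _ : Fc => mu1)) :=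
    measurePreserving_piEquivPiSubtypeProd (fun _ : V => mu1) (· ∈ F)
  set e2 : (Fc → ℝ) ≃ᵐ (FcL → ℝ) × (FcR → ℝ) :=
    MeasurableEquiv.piEquivPiSubtypeProd (fun _ : Fc => ℝ) (fun w => (w : V) ∈ L) with he2
  have mp2 : MeasurePreserving e2 (Measure.pi fun _ : Fc => mu1)
      ((Measure.pi fun _ : FcL => mu1).prod
        (Measure.pi fun _ : FcR => mu1)) :=
    measurePreserving_piEquivPiSubtypeProd (fun _ : Fc => mu1) _
  set eL : TL ≃ FcL :=
    ⟨fun v => ⟨⟨v, hLnF v v.2⟩, v.2⟩, fun w => ⟨(w : Fc), w.2⟩,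
      fun v => rfl, fun w => rfl⟩ with heL
  set eR : TR ≃ FcR :=
    ⟨fun v => ⟨⟨v, hRnF v v.2⟩, fun h => hLnR v h v.2⟩,
      fun w => ⟨(w : Fc), hmemR _ (w : Fc).2 w.2⟩,
      fun v => rfl, fun w => rfl⟩ with heR
  set cL : (TL → ℝ) ≃ᵐ (FcL → ℝ) :=
    MeasurableEquiv.piCongrLeft (fun _ => ℝ) eL with hcL
  set cR : (TR → ℝ) ≃ᵐ (FcR → ℝ) :=
    MeasurableEquiv.piCongrLeft (fun _ => ℝ) eR with hcR
  have mpcL : MeasurePreserving cL μL (Measure.pi fun _ : FcL => mu1) :=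
    measurePreserving_piCongrLeft (fun _ => mu1) eL
  have mpcR : MeasurePreserving cR μR (Measure.pi fun _ : FcR => mu1) :=
    measurePreserving_piCongrLeft (fun _ => mu1) eR
  set Φe : ((TF → ℝ) × ((TL → ℝ) × (TR → ℝ))) ≃ᵐ (V → ℝ) :=
    ((MeasurableEquiv.refl (TF → ℝ)).prodCongr ((cL.prodCongr cR).trans e2.symm)).trans e1.symm
    with hΦe
  have mpΦ : MeasurePreserving Φe (μF.prod (μL.prod μR)) (Measure.pi fun _ : V => mu1) := by
    exact mp1.symm e1 |>.comp
      ((MeasurePreserving.id μF).prod ((mp2.symm e2).comp (mpcL.prod mpcR)))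
  -- coordinate formula for Φe
  have hΦcoord : ∀ (z : (TF → ℝ) × ((TL → ℝ) × (TR → ℝ))) (v : V),
      Φe z v = if h : v ∈ F then z.1 ⟨v, h⟩ else
        if h' : v ∈ L then z.2.1 ⟨v, h'⟩ else z.2.2 ⟨v, hmemR v h h'⟩ := by
    intro z v
    have step1 : Φe z v = if h : v ∈ F then z.1 ⟨v, h⟩
        else e2.symm (cL z.2.1, cR z.2.2) ⟨v, h⟩ := rfl
    rw [step1]
    by_cases h : v ∈ F
    · simp [h]
    · rw [dif_neg h, dif_neg h]
      have step2 : e2.symm (cL z.2.1, cR z.2.2) ⟨v, h⟩ =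
          if h' : (⟨v, h⟩ : Fc).1 ∈ L then cL z.2.1 ⟨⟨v, h⟩, h'⟩
          else cR z.2.2 ⟨⟨v, h⟩, h'⟩ := rfl
      rw [step2]
      by_cases h' : v ∈ L
      · rw [dif_pos h', dif_pos h', hcL, piCongrLeft_const_apply]; rfl
      · rw [dif_neg h', dif_neg h', hcR, piCongrLeft_const_apply]; rfl
  -- agreement lemmas
  have hagreeL : ∀ y u w v, v ∈ L ∪ F → Φe (y, (u, w)) v = ΦL y u v := by
    intro y u w v hv
    rw [hΦcoord, hΦL]
    rcases Finset.mem_union.1 hv with h|h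
    · have hF := hLnF v h
      simp [h, hF]
    · simp [h]
  have hagreeR0 : ∀ y u w v, v ∈ R ∪ F → Φe (y, (u, w)) v = ΦR y w v := by
    intro y u w v hv
    rw [hΦcoord, hΦR]
    rcases Finset.mem_union.1 hv with h|h
    · have hF := hRnF v h
      have hL' : ¬ v ∈ L := fun hL => hLnR v hL h
      simp only [dif_neg hF, dif_neg hL', dif_pos h]
    · simp [h]
  -- the full integrand
  set P : (V → ℝ) → ℝ := fun x =>
    ∏ e ∈ E, Sym2.lift ⟨fun a b => W (x a) (x b), fun a b => hsym (x a) (x b)⟩ e with hP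
  have hfact : ∀ y u w, P (Φe (y, (u, w))) = f y u * g y w := by
    intro y u w
    rw [hP]
    show ∏ e ∈ E, _ = _
    rw [← hEunion, Finset.prod_union hEdisj, hf, hg]
    congr 1
    · refine Finset.prod_congr rfl fun e => Sym2.ind (fun a b he => ?_) e
      obtain ⟨-, ha, hb⟩ := (hmemEL a b).1 he
      simp only [Sym2.lift_mk]
      rw [hagreeL y u w a ha, hagreeL y u w b hb]
    · refine Finset.prod_congr rfl fun e => Sym2.ind (fun a b he => ?_) e
      obtain ⟨-, ha, hb⟩ := (hmemER a b).1 he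
      simp only [Sym2.lift_mk]
      rw [hagreeR0 y u w a ha, hagreeR0 y u w b hb]
  -- density of H
  have hPmeas : Measurable P := meas_edge_prod W hsym hmeas E
  have hPint : Integrable P (Measure.pi fun _ : V => mu1) :=
    ⟨hPmeas.aestronglyMeasurable, HasFiniteIntegral.of_bounded (C := C ^ E.card)
      (ae_of_all _ fun x => by
        simpa [Real.norm_eq_abs] using abs_edge_prod_le W hsym hC E x)⟩
  have hdH : graphDensity H W hsym = ∫ x, P x ∂(Measure.pi fun _ : V => mu1) := by
    rw [graphDensity, restrict_pi_eq]
  -- φ facts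
  have hφsymmF : ∀ v ∈ F, φ.symm v = v := by
    intro v hv
    rcases hmem3 (φ.symm v) with h|h|h
    · have := hφLR _ h
      rw [RelIso.apply_symm_apply] at this
      exact absurd hv (hRnF v this)
    · have := hφRL _ h
      rw [RelIso.apply_symm_apply] at this
      exact absurd hv (hLnF v this)
    · have := hfix _ h
      have h2 : v = φ.symm v := by
        conv_lhs => rw [← RelIso.apply_symm_apply φ v]
        rw [this]
      exact h2.symm
  have hφsymmR : ∀ v ∈ R, φ.symm v ∈ L := by
    intro v hv
    rcases hmem3 (φ.symm v) with h|h|h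
    · exact h
    · have := hφRL _ h
      rw [RelIso.apply_symm_apply] at this
      exact absurd hv (hLnR v this)
    · have := hfix _ h
      rw [RelIso.apply_symm_apply] at this
      rw [← this] at h
      exact absurd h (hRnF v hv)
  set eφ : TL ≃ TR := ⟨fun v => ⟨φ v, hφLR v v.2⟩, fun w => ⟨φ.symm w, hφsymmR w w.2⟩,
    fun v => Subtype.ext (φ.toEquiv.symm_apply_apply v),
    fun w => Subtype.ext (φ.toEquiv.apply_symm_apply w)⟩ with heφ
  -- g in terms of f
  have hagreeφ : ∀ y w a, a ∈ R ∪ F →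
      ΦL y (fun v => w (eφ v)) (φ.symm a) = ΦR y w a := by
    intro y w a ha
    rcases Finset.mem_union.1 ha with h|h
    · have hsL : φ.symm a ∈ L := hφsymmR a h
      have hsF : φ.symm a ∉ F := hLnF _ hsL
      have haF : a ∉ F := hRnF a h
      rw [hΦL, hΦR]
      simp only [dif_neg hsF, dif_pos hsL, dif_neg haF, dif_pos h, heφ]
      have : φ ((⟨φ.symm a, hsL⟩ : TL) : V) = a := RelIso.apply_symm_apply φ a
      exact congrArg w (Subtype.ext this)
    · have hsa : φ.symm a = a := hφsymmF a h
      rw [hΦL, hΦR, hsa]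
      simp only [dif_pos h]
  have hgf : ∀ y w, g y w = f y (fun v => w (eφ v)) := by
    intro y w
    rw [hg, hf]
    refine Finset.prod_nbij' (Sym2.map ⇑φ.symm) (Sym2.map ⇑φ) ?_ ?_ ?_ ?_ ?_
    · refine fun e => Sym2.ind (fun a b he => ?_) e
      obtain ⟨hadj, ha, hb⟩ := (hmemER a b).1 he
      rw [Sym2.map_pair_eq, hmemEL]
      have hadj' : H.Adj (φ.symm a) (φ.symm b) := φ.symm.map_rel_iff.2 hadj
      refine ⟨hadj', ?_, ?_⟩
      · rcases Finset.mem_union.1 ha with h|h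
        · exact Finset.mem_union_left _ (hφsymmR a h)
        · rw [hφsymmF a h]; exact Finset.mem_union_right _ h
      · rcases Finset.mem_union.1 hb with h|h
        · exact Finset.mem_union_left _ (hφsymmR b h)
        · rw [hφsymmF b h]; exact Finset.mem_union_right _ h
    · refine fun e => Sym2.ind (fun a b he => ?_) e
      obtain ⟨hadj, ha, hb⟩ := (hmemEL a b).1 he
      rw [Sym2.map_pair_eq, hmemER]
      have hadj' : H.Adj (φ a) (φ b) := φ.map_rel_iff.2 hadj
      refine ⟨hadj', ?_, ?_⟩
      · rcases Finset.mem_union.1 ha with h|h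
        · exact Finset.mem_union_left _ (hφLR a h)
        · rw [hfix a h]; exact Finset.mem_union_right _ h
      · rcases Finset.mem_union.1 hb with h|h
        · exact Finset.mem_union_left _ (hφLR b h)
        · rw [hfix b h]; exact Finset.mem_union_right _ h
    · intro e he
      have hcomp : ⇑φ ∘ ⇑φ.symm = id := funext fun a => RelIso.apply_symm_apply φ a
      rw [Sym2.map_map, hcomp, Sym2.map_id]; rfl
    · intro e he
      have hcomp : ⇑φ.symm ∘ ⇑φ = id := funext fun a => RelIso.symm_apply_apply φ a
      rw [Sym2.map_map, hcomp, Sym2.map_id]; rfl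
    · refine fun e => Sym2.ind (fun a b he => ?_) e
      obtain ⟨-, ha, hb⟩ := (hmemER a b).1 he
      rw [Sym2.map_pair_eq]
      simp only [Sym2.lift_mk]
      rw [hagreeφ y w a ha, hagreeφ y w b hb]
  -- change of variables for B = A
  have hBA : ∀ y, ∫ w, g y w ∂μR = A y := by
    intro y
    have mpφpi : MeasurePreserving (MeasurableEquiv.piCongrLeft (fun _ : TR => ℝ) eφ) μL μR :=
      measurePreserving_piCongrLeft (fun _ : TR => mu1) eφ
    rw [← mpφpi.integral_comp (MeasurableEquiv.measurableEmbedding _) (fun w => g y w), hA]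
    refine integral_congr_ae (ae_of_all _ fun u => ?_)
    show g y ((MeasurableEquiv.piCongrLeft (fun _ : TR => ℝ) eφ) u) = f y u
    rw [hgf y _]
    have harg : (fun v => (MeasurableEquiv.piCongrLeft (fun _ : TR => ℝ) eφ) u (eφ v)) = u := by
      funext v
      rw [piCongrLeft_const_apply]
      exact congrArg u (eφ.symm_apply_apply v)
    rw [harg]
  -- measurability and integrability of f
  have hΦLmeas : Measurable fun q : (TF → ℝ) × (TL → ℝ) => ΦL q.1 q.2 := by
    rw [hΦL]
    refine measurable_pi_lambda _ fun v => ?_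
    by_cases h : v ∈ F
    · simp only [dif_pos h]
      exact (measurable_pi_apply _).comp measurable_fst
    · simp only [dif_neg h]
      by_cases h' : v ∈ L
      · simp only [dif_pos h']
        exact (measurable_pi_apply _).comp measurable_snd
      · simp only [dif_neg h']
        exact measurable_const
  have hfmeas : Measurable fun q : (TF → ℝ) × (TL → ℝ) => f q.1 q.2 := by
    rw [hf]
    exact (meas_edge_prod W hsym hmeas EL).comp hΦLmeas
  have hfbd : ∀ (y : TF → ℝ) (u : TL → ℝ), |f y u| ≤ C ^ EL.card := by
    intro y u
    rw [hf]
    exact abs_edge_prod_le W hsym hC EL (ΦL y u)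
  have hfint : Integrable (fun q : (TF → ℝ) × (TL → ℝ) => f q.1 q.2) (μF.prod μL) :=
    ⟨hfmeas.aestronglyMeasurable, HasFiniteIntegral.of_bounded (C := C ^ EL.card)
      (ae_of_all _ fun q => by simpa [Real.norm_eq_abs] using hfbd q.1 q.2)⟩
  have hAmeas : Measurable A := by
    rw [hA]
    exact (hfmeas.stronglyMeasurable.integral_prod_right').measurable
  have hAbd : ∀ y, |A y| ≤ C ^ EL.card := by
    intro y
    rw [hA]
    have := norm_integral_le_of_norm_le_const (μ := μL) (C := C ^ EL.card)
      (f := fun u => f y u) (ae_of_all _ fun u => by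
        simpa [Real.norm_eq_abs] using hfbd y u)
    simpa [Real.norm_eq_abs, measure_univ] using this
  -- main identity for t_H
  have hcomp : Integrable (fun z => P (Φe z)) (μF.prod (μL.prod μR)) :=
    (mpΦ.integrable_comp_emb Φe.measurableEmbedding).mpr hPint
  have step_tH : ∫ x, P x ∂(Measure.pi fun _ : V => mu1) = ∫ y, A y * A y ∂μF := by
    rw [← mpΦ.integral_comp Φe.measurableEmbedding P, integral_prod _ hcomp]
    refine integral_congr_ae (ae_of_all _ fun y => ?_)
    calc ∫ p : (TL → ℝ) × (TR → ℝ), P (Φe (y, p)) ∂(μL.prod μR)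
        = ∫ p : (TL → ℝ) × (TR → ℝ), f y p.1 * g y p.2 ∂(μL.prod μR) :=
          integral_congr_ae (ae_of_all _ fun p => hfact y p.1 p.2)
      _ = (∫ u, f y u ∂μL) * ∫ w, g y w ∂μR := integral_prod_mul _ _
      _ = A y * A y := by rw [hBA y, hA]
  -- the induced graph density
  set S : Set V := ↑(L ∪ F) with hS
  have hmemS : ∀ v : V, v ∈ S ↔ v ∈ L ∪ F := fun v => Finset.mem_coe
  set VS := ↥S with hVS
  set SF := {v : VS // (v : V) ∈ F} with hSF
  set SL := {v : VS // ¬ (v : V) ∈ F} with hSL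
  letI iSF : Fintype SF := Subtype.fintype _
  letI iSL : Fintype SL := Subtype.fintype _
  set E' : Finset (Sym2 VS) := (Set.toFinite (H.induce S).edgeSet).toFinset with hE'
  set Q : (VS → ℝ) → ℝ := fun x =>
    ∏ e ∈ E', Sym2.lift ⟨fun a b => W (x a) (x b), fun a b => hsym (x a) (x b)⟩ e with hQ
  have hdI : graphDensity (H.induce S) W hsym = ∫ x, Q x ∂(Measure.pi fun _ : VS => mu1) := by
    rw [graphDensity, restrict_pi_eq]
  set e3 : (VS → ℝ) ≃ᵐ (SF → ℝ) × (SL → ℝ) :=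
    MeasurableEquiv.piEquivPiSubtypeProd (fun _ : VS => ℝ) (fun v => (v : V) ∈ F) with he3
  have mp3 : MeasurePreserving e3 (Measure.pi fun _ : VS => mu1)
      ((Measure.pi fun _ : SF => mu1).prod (Measure.pi fun _ : SL => mu1)) :=
    measurePreserving_piEquivPiSubtypeProd (fun _ : VS => mu1) _
  set eF2 : TF ≃ SF :=
    ⟨fun v => ⟨⟨v, (hmemS v).2 (Finset.mem_union_right _ v.2)⟩, v.2⟩,
      fun w => ⟨(w : VS), w.2⟩, fun v => rfl, fun w => rfl⟩ with heF2
  set eL2 : TL ≃ SL :=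
    ⟨fun v => ⟨⟨v, (hmemS v).2 (Finset.mem_union_left _ v.2)⟩, fun h => hLnF v v.2 h⟩,
      fun w => ⟨(w : VS), by
        rcases Finset.mem_union.1 ((hmemS _).1 (w : VS).2) with h|h
        · exact h
        · exact absurd h w.2⟩,
      fun v => rfl, fun w => rfl⟩ with heL2
  set cF2 : (TF → ℝ) ≃ᵐ (SF → ℝ) := MeasurableEquiv.piCongrLeft (fun _ => ℝ) eF2 with hcF2
  set cL2 : (TL → ℝ) ≃ᵐ (SL → ℝ) := MeasurableEquiv.piCongrLeft (fun _ => ℝ) eL2 with hcL2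
  have mpcF2 : MeasurePreserving cF2 μF (Measure.pi fun _ : SF => mu1) :=
    measurePreserving_piCongrLeft (fun _ => mu1) eF2
  have mpcL2 : MeasurePreserving cL2 μL (Measure.pi fun _ : SL => mu1) :=
    measurePreserving_piCongrLeft (fun _ => mu1) eL2
  set Ψ : ((TF → ℝ) × (TL → ℝ)) ≃ᵐ (VS → ℝ) := (cF2.prodCongr cL2).trans e3.symm with hΨ
  have mpΨ : MeasurePreserving Ψ (μF.prod μL) (Measure.pi fun _ : VS => mu1) := by
    exact (mp3.symm e3).comp (mpcF2.prod mpcL2)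
  have hΨcoord : ∀ (q : (TF → ℝ) × (TL → ℝ)) (a : VS), Ψ q a = ΦL q.1 q.2 ↑a := by
    intro q a
    have step : Ψ q a = if h : (a : V) ∈ F then cF2 q.1 ⟨a, h⟩ else cL2 q.2 ⟨a, h⟩ := rfl
    rw [step]
    simp only [hΦL]
    by_cases h : (a : V) ∈ F
    · rw [dif_pos h, dif_pos h, hcF2, piCongrLeft_const_apply]; rfl
    · rw [dif_neg h, dif_neg h, hcL2, piCongrLeft_const_apply]
      have hL' : (a : V) ∈ L := by
        rcases Finset.mem_union.1 ((hmemS _).1 a.2) with h'|h'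
        · exact h'
        · exact absurd h' h
      rw [dif_pos hL']
      rfl
  have hQf : ∀ q : (TF → ℝ) × (TL → ℝ), Q (Ψ q) = f q.1 q.2 := by
    intro q
    rw [hQ, hf]
    show ∏ e ∈ E', _ = _
    refine Finset.prod_nbij (Sym2.map (Subtype.val : VS → V)) ?_ ?_ ?_ ?_
    · refine fun e => Sym2.ind (fun a b he => ?_) e
      rw [hE', Set.Finite.mem_toFinset, SimpleGraph.mem_edgeSet] at he
      have hadj : H.Adj ↑a ↑b := he
      rw [Sym2.map_pair_eq, hmemEL]
      exact ⟨hadj, (hmemS _).1 a.2, (hmemS _).1 b.2⟩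
    · intro e _ e' _ hee
      exact Sym2.map.injective Subtype.val_injective hee
    · refine fun e => Sym2.ind (fun a b he => ?_) e
      obtain ⟨hadj, ha, hb⟩ := (hmemEL a b).1 he
      refine ⟨s(⟨a, (hmemS a).2 ha⟩, ⟨b, (hmemS b).2 hb⟩), ?_, ?_⟩
      · simp only [Finset.coe_sort_coe, Finset.mem_coe, hE', Set.Finite.mem_toFinset,
          SimpleGraph.mem_edgeSet]
        exact hadj
      · rw [Sym2.map_pair_eq]
    · refine fun e => Sym2.ind (fun a b he => ?_) e
      rw [Sym2.map_pair_eq]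
      simp only [Sym2.lift_mk]
      rw [hΨcoord q a, hΨcoord q b]
  have step_tI : graphDensity (H.induce S) W hsym = ∫ y, A y ∂μF := by
    rw [hdI, ← mpΨ.integral_comp Ψ.measurableEmbedding Q]
    have : ∫ q, Q (Ψ q) ∂(μF.prod μL) = ∫ q : (TF → ℝ) × (TL → ℝ), f q.1 q.2 ∂(μF.prod μL) :=
      integral_congr_ae (ae_of_all _ fun q => hQf q)
    rw [this, integral_prod _ hfint]
  -- conclusion
  have htH : graphDensity H W hsym = ∫ y, A y * A y ∂μF := hdH.trans step_tH
  constructor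
  · rw [htH, step_tI]
    have h1 : (∫ y, A y ∂μF) ^ 2 ≤ ∫ y, (A y)^2 ∂μF := sq_int_le μF A hAmeas hAbd
    have h2 : ∫ y, (A y)^2 ∂μF = ∫ y, A y * A y ∂μF := by
      refine integral_congr_ae (ae_of_all _ fun y => ?_)
      ring
    linarith
  · rw [htH]
    exact integral_nonneg fun y => mul_self_nonneg _
end

section
/- Let H be a graph in which every vertex has odd degree, and let 0 < α < 1. Define the kernel W : [0,1]² → ℝ by W(x,y) = 0 if x,y ∈ [0,α], W(x,y) = 1 if x,y ∈ (α,1], and W(x,y) = -1 otherwise. Then t_H(W) = (1-α)^v · I_H(α/(1-α)), where v = |V(H)| and I_H(x) = Σ_{k≥0} i_k(H)(-x)^k with i_k(H) the number of independent sets of order k in H. -/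
open MeasureTheory
open scoped Classical

/-- `i_k(H)`: the number of independent sets of size `k` in `H`. -/
noncomputable def indepNum {V : Type} [Fintype V] (H : SimpleGraph V) (k : ℕ) : ℕ :=
  (Finset.univ.filter fun s : Finset V =>
    s.card = k ∧ ∀ u ∈ s, ∀ v ∈ s, ¬ H.Adj u v).card

/-- The independence polynomial `I_H(x) = Σ_k i_k(H) (-x)^k`. -/
noncomputable def indepPoly {V : Type} [Fintype V] (H : SimpleGraph V) (x : ℝ) : ℝ :=
  ∑ k ∈ Finset.range (Fintype.card V + 1), (indepNum H k : ℝ) * (-x) ^ k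

open Finset in
lemma prod_dart {V : Type} [Fintype V] (H : SimpleGraph V) [DecidableRel H.Adj] (g : V → ℝ) :
    ∏ e ∈ (Set.toFinite H.edgeSet).toFinset,
      Sym2.lift ⟨fun a b => g a * g b, fun a b => mul_comm _ _⟩ e
      = ∏ v, g v ^ H.degree v := by
  classical
  have h1 : ∏ e ∈ (Set.toFinite H.edgeSet).toFinset,
      Sym2.lift ⟨fun a b => g a * g b, fun a b => mul_comm _ _⟩ e
      = ∏ e ∈ (Set.toFinite H.edgeSet).toFinset,
        ∏ d ∈ Finset.univ.filter (fun d : H.Dart => d.edge = e), g d.fst := by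
    refine Finset.prod_congr rfl fun e he => ?_
    rw [Set.Finite.mem_toFinset] at he
    revert he
    refine Sym2.ind (fun a b he => ?_) e
    have hadj : H.Adj a b := H.mem_edgeSet.mp he
    set d : H.Dart := ⟨(a, b), hadj⟩ with hd
    have hfib : (Finset.univ.filter (fun d' : H.Dart => d'.edge = s(a, b))) = {d, d.symm} := by
      have := SimpleGraph.Dart.edge_fiber d
      exact this
    rw [hfib, Finset.prod_pair d.symm_ne.symm]
    simp [Sym2.lift_mk]; rfl
  rw [h1, Finset.prod_fiberwise_of_maps_to (fun d _ => ?memb) (fun d : H.Dart => g d.fst)]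
  case memb => rw [Set.Finite.mem_toFinset]; exact d.edge_mem
  rw [← Finset.prod_fiberwise_of_maps_to (t := (Finset.univ : Finset V))
    (fun d : H.Dart => fun _ => Finset.mem_univ _) (fun d : H.Dart => g d.fst)]
  refine Finset.prod_congr rfl fun v _ => ?_
  have hcard : (Finset.univ.filter (fun d : H.Dart => d.fst = v)).card = H.degree v := by
    simpa using H.dart_fst_fiber_card_eq_degree v
  calc ∏ d ∈ Finset.univ.filter (fun d : H.Dart => d.fst = v), g d.fst
      = ∏ d ∈ Finset.univ.filter (fun d : H.Dart => d.fst = v), g v :=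
        Finset.prod_congr rfl fun d hd => by rw [(Finset.mem_filter.1 hd).2]
    _ = g v ^ H.degree v := by rw [Finset.prod_const, hcard]

open Finset in
lemma wS_comm {V : Type} (S : Finset V) (a b : V) :
    (if a ∈ S ∧ b ∈ S then (0:ℝ) else if a ∉ S ∧ b ∉ S then 1 else -1)
    = (if b ∈ S ∧ a ∈ S then (0:ℝ) else if b ∉ S ∧ a ∉ S then 1 else -1) := by
  by_cases ha : a ∈ S <;> by_cases hb : b ∈ S <;> simp [ha, hb]

lemma prod_val {V : Type} [Fintype V] (H : SimpleGraph V) [DecidableRel H.Adj]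
    (hodd : ∀ v : V, Odd (H.degree v)) (S : Finset V) :
    ∏ e ∈ (Set.toFinite H.edgeSet).toFinset,
      Sym2.lift ⟨fun a b => (if a ∈ S ∧ b ∈ S then (0:ℝ) else if a ∉ S ∧ b ∉ S then 1 else -1),
        fun a b => wS_comm S a b⟩ e
      = if (∀ u ∈ S, ∀ v ∈ S, ¬ H.Adj u v) then (-1 : ℝ) ^ S.card else 0 := by
  classical
  by_cases hind : ∀ u ∈ S, ∀ v ∈ S, ¬ H.Adj u v
  · rw [if_pos hind]
    set g : V → ℝ := fun v => if v ∈ S then -1 else 1 with hg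
    have hcong : ∏ e ∈ (Set.toFinite H.edgeSet).toFinset,
        Sym2.lift ⟨fun a b => (if a ∈ S ∧ b ∈ S then (0:ℝ) else if a ∉ S ∧ b ∉ S then 1 else -1),
          fun a b => wS_comm S a b⟩ e
        = ∏ e ∈ (Set.toFinite H.edgeSet).toFinset,
          Sym2.lift ⟨fun a b => g a * g b, fun a b => mul_comm _ _⟩ e := by
      refine Finset.prod_congr rfl fun e he => ?_
      rw [Set.Finite.mem_toFinset] at he
      revert he
      refine Sym2.ind (fun a b he => ?_) e
      have hadj : H.Adj a b := H.mem_edgeSet.mp he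
      have hnot : ¬ (a ∈ S ∧ b ∈ S) := fun ⟨ha, hb⟩ => hind a ha b hb hadj
      simp only [Sym2.lift_mk]
      by_cases ha : a ∈ S <;> by_cases hb : b ∈ S
      · exact absurd ⟨ha, hb⟩ hnot
      all_goals simp [hg, ha, hb]
    rw [hcong, prod_dart]
    have : ∀ v, g v ^ H.degree v = if v ∈ S then (-1:ℝ) else 1 := by
      intro v
      rw [hg]
      by_cases hv : v ∈ S
      · simp [hv, (hodd v).neg_one_pow]
      · simp [hv]
    simp only [this]
    rw [Finset.prod_ite_mem, Finset.univ_inter, Finset.prod_const]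
  · rw [if_neg hind]
    push_neg at hind
    obtain ⟨u, hu, v, hv, hadj⟩ := hind
    refine Finset.prod_eq_zero (i := s(u, v)) ?_ ?_
    · rw [Set.Finite.mem_toFinset]; exact H.mem_edgeSet.mpr hadj
    · simp [Sym2.lift_mk, hu, hv]

open Finset in
set_option maxHeartbeats 1000000 in
/-- If every vertex of `H` has odd degree and `0 < α < 1`, then for the kernel that is
`0` on `[0,α]²`, `1` on `(α,1]²` and `-1` otherwise,
`t_H(W) = (1-α)^v · I_H(α/(1-α))`. -/
theorem stmt1 {V : Type} [Fintype V] (H : SimpleGraph V) [DecidableRel H.Adj]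
    (hodd : ∀ v : V, Odd (H.degree v)) (α : ℝ) (h0 : 0 < α) (h1 : α < 1)
    (W : ℝ → ℝ → ℝ)
    (hW : ∀ x y, W x y = if x ≤ α ∧ y ≤ α then 0 else if α < x ∧ α < y then 1 else -1)
    (hsym : ∀ a b, W a b = W b a) :
    graphDensity H W hsym = (1 - α) ^ Fintype.card V * indepPoly H (α / (1 - α)) := by
  classical
  set n := Fintype.card V with hn
  have h1α : (0:ℝ) < 1 - α := by linarith
  set box : Set (V → ℝ) := Set.univ.pi fun _ : V => Set.Icc (0 : ℝ) 1 with hbox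
  set A : Finset V → Set (V → ℝ) :=
    fun S => Set.univ.pi fun v => if v ∈ S then Set.Icc (0:ℝ) α else Set.Ioc α 1 with hA
  set c : Finset V → ℝ :=
    fun S => if (∀ u ∈ S, ∀ v ∈ S, ¬ H.Adj u v) then (-1 : ℝ) ^ S.card else 0 with hc
  set f : (V → ℝ) → ℝ := fun x => ∏ e ∈ (Set.toFinite H.edgeSet).toFinset,
      Sym2.lift ⟨fun a b => W (x a) (x b), fun a b => hsym (x a) (x b)⟩ e with hf
  have hboxm : MeasurableSet box :=
    MeasurableSet.univ_pi fun _ => measurableSet_Icc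
  have hAm : ∀ S, MeasurableSet (A S) := fun S =>
    MeasurableSet.univ_pi fun v => by
      by_cases hv : v ∈ S
      · simp only [hA, hv, if_true]; exact measurableSet_Icc
      · simp only [hA, hv, if_false]; exact measurableSet_Ioc
  have hAsub : ∀ S, A S ⊆ box := by
    intro S
    refine Set.pi_mono fun v _ => ?_
    by_cases hv : v ∈ S
    · simp only [hv, if_true]
      exact Set.Icc_subset_Icc le_rfl h1.le
    · simp only [hv, if_false]
      exact fun y hy => ⟨le_trans h0.le hy.1.le, hy.2⟩
  have hvolA : ∀ S : Finset V, volume (A S)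
      = ∏ v : V, if v ∈ S then ENNReal.ofReal α else ENNReal.ofReal (1 - α) := by
    intro S
    rw [hA, volume_pi_pi]
    refine Finset.prod_congr rfl fun v _ => ?_
    by_cases hv : v ∈ S
    · simp [hv, Real.volume_Icc]
    · simp [hv, Real.volume_Ioc]
  have hfin : ∀ S : Finset V, volume (A S) < ⊤ := by
    intro S
    rw [hvolA S]
    refine ENNReal.prod_lt_top fun v _ => ?_
    by_cases hv : v ∈ S <;> simp [hv]
  have hvolR : ∀ S : Finset V, (volume (A S)).toReal
      = α ^ S.card * (1 - α) ^ (n - S.card) := by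
    intro S
    rw [hvolA S, ENNReal.toReal_prod]
    have : ∀ v : V, ((if v ∈ S then ENNReal.ofReal α else ENNReal.ofReal (1-α))).toReal
        = if v ∈ S then α else (1 - α) := by
      intro v
      by_cases hv : v ∈ S
      · simp [hv, ENNReal.toReal_ofReal h0.le]
      · simp [hv, ENNReal.toReal_ofReal h1α.le]
    simp only [this]
    rw [Finset.prod_ite]
    have e1 : Finset.univ.filter (fun v => v ∈ S) = S := by
      ext v; simp
    have e2 : (Finset.univ.filter (fun v => ¬ v ∈ S)).card = n - S.card := by
      rw [show Finset.univ.filter (fun v => ¬ v ∈ S) = Sᶜ from by ext v; simp [Finset.mem_compl]]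
      rw [Finset.card_compl]
    rw [e1, Finset.prod_const, Finset.prod_const, e2]
  -- pointwise decomposition
  have hpt : ∀ x : V → ℝ, box.indicator f x
      = ∑ S : Finset V, (A S).indicator (fun _ => c S) x := by
    intro x
    by_cases hx : x ∈ box
    · rw [Set.indicator_of_mem hx]
      have hxIcc : ∀ v, x v ∈ Set.Icc (0:ℝ) 1 := by
        rw [hbox, Set.mem_univ_pi] at hx; exact hx
      set S₀ : Finset V := Finset.univ.filter (fun v => x v ≤ α) with hS₀
      have hmem : ∀ a, a ∈ S₀ ↔ x a ≤ α := by intro a; simp [hS₀]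
      have hxA : x ∈ A S₀ := by
        rw [hA, Set.mem_univ_pi]
        intro v
        by_cases hv : x v ≤ α
        · rw [if_pos ((hmem v).mpr hv)]
          exact ⟨(hxIcc v).1, hv⟩
        · rw [if_neg (fun h => hv ((hmem v).mp h))]
          exact ⟨not_le.mp hv, (hxIcc v).2⟩
      have huniq : ∀ S : Finset V, x ∈ A S → S = S₀ := by
        intro S hxS
        rw [hA, Set.mem_univ_pi] at hxS
        ext v
        rw [hmem]
        constructor
        · intro hv; have := hxS v; rw [if_pos hv] at this; exact this.2
        · intro hv
          by_contra hv'
          have := hxS v; rw [if_neg hv'] at this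
          exact absurd hv (not_le.mpr this.1)
      rw [Finset.sum_eq_single S₀
        (fun S _ hne => Set.indicator_of_notMem (fun hxS => hne (huniq S hxS)) _)
        (fun h => absurd (Finset.mem_univ _) h)]
      rw [Set.indicator_of_mem hxA]
      simp only [hf, hc]
      rw [← prod_val H hodd S₀]
      refine Finset.prod_congr rfl fun e _ => ?_
      refine Sym2.ind (fun a b => ?_) e
      simp only [Sym2.lift_mk]
      rw [hW]
      simp only [hmem, not_le]
    · rw [Set.indicator_of_notMem hx]
      symm
      refine Finset.sum_eq_zero fun S _ => ?_
      exact Set.indicator_of_notMem (fun hxS => hx (hAsub S hxS)) _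
  have hint : graphDensity H W hsym = ∑ S : Finset V, (volume (A S)).toReal • c S := by
    rw [graphDensity, ← integral_indicator hboxm]
    rw [show (fun x => box.indicator f x) = fun x =>
        ∑ S : Finset V, (A S).indicator (fun _ => c S) x from funext hpt]
    rw [integral_finset_sum Finset.univ (fun S _ =>
      (integrable_indicator_iff (hAm S)).2 (integrableOn_const (hfin S).ne))]
    exact Finset.sum_congr rfl fun S _ => integral_indicator_const (c S) (hAm S)
  rw [hint]
  -- algebra
  set F : ℕ → ℝ := fun k => (-1 : ℝ) ^ k * (α ^ k * (1 - α) ^ (n - k)) with hF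
  have hterm : ∀ S : Finset V, (volume (A S)).toReal • c S
      = if (∀ u ∈ S, ∀ v ∈ S, ¬ H.Adj u v) then F S.card else 0 := by
    intro S
    rw [hvolR S, hc, smul_eq_mul, hF]
    by_cases hind : ∀ u ∈ S, ∀ v ∈ S, ¬ H.Adj u v <;> simp [hind] <;> ring
  simp only [hterm]
  rw [← Finset.sum_fiberwise_of_maps_to (g := Finset.card) (t := Finset.range (n + 1))
    (fun S _ => Finset.mem_range.2 (Nat.lt_succ_of_le (by
      simpa using Finset.card_le_univ S)))]
  rw [indepPoly, Finset.mul_sum]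
  refine Finset.sum_congr rfl fun k hk => ?_
  have hk' : k ≤ n := Nat.lt_succ_iff.mp (Finset.mem_range.mp hk)
  have hinner : ∑ S ∈ Finset.univ.filter (fun S : Finset V => S.card = k),
      (if (∀ u ∈ S, ∀ v ∈ S, ¬ H.Adj u v) then F S.card else 0)
      = (indepNum H k : ℝ) * F k := by
    rw [← Finset.sum_filter, Finset.filter_filter]
    have : ∀ S ∈ Finset.univ.filter (fun S : Finset V =>
        S.card = k ∧ ∀ u ∈ S, ∀ v ∈ S, ¬ H.Adj u v), F S.card = F k := by
      intro S hS
      rw [(Finset.mem_filter.mp hS).2.1]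
    rw [Finset.sum_congr rfl this, Finset.sum_const, nsmul_eq_mul]
    have hI : (Finset.univ.filter (fun s : Finset V =>
        s.card = k ∧ ∀ u ∈ s, ∀ v ∈ s, ¬ H.Adj u v)).card = indepNum H k := by
      refine congrArg Finset.card ?_
      ext s
      simp only [Finset.mem_filter]
    rw [hI]
  rw [hinner]
  simp only [hF]
  have hsplit : (1 - α) ^ n = (1 - α) ^ (n - k) * (1 - α) ^ k := by
    rw [← pow_add, Nat.sub_add_cancel hk']
  rw [hsplit]
  have hne : (1 - α) ≠ 0 := ne_of_gt h1α
  field_simp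
  have hX : (1 - α)⁻¹ ^ k * (1 - α) ^ k = 1 := by
    rw [inv_pow, inv_mul_cancel₀ (pow_ne_zero _ hne)]
  linear_combination (-((indepNum H k : ℝ) * α ^ k * (-1) ^ k)) * hX
end

section
/- Every connected positive graph with at least one edge contains a vertex of even degree. Equivalently: if H is a connected graph with at least one edge in which all vertices have odd degree, then there exists a kernel W : [0,1]² → ℝ with t_H(W) < 0. -/
/-!
Write `I_A(x) = ∑_{S ⊆ A independent} (-x)^{|S|}`, so that `I_{A+v} = I_A - x I_{A ∖ N(v)}`.
For the kernel `W_p` equal to `0` on `[0,p]²`, `-1` on the two mixed blocks and `1` on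
`(p,1]²`, the product of `W_p(x_a, x_b)` over the edges vanishes unless `T = {v | x_v ≤ p}` is
independent, and is then `(-1)^{∑_{v ∈ T} deg v} = (-1)^{|T|}` because all degrees are odd.
Integrating over the cells of `T` gives `t_H(W_p) = (1-p)^n I_H(p/(1-p))`, so it suffices that
`I_H` is negative somewhere on `(0, ∞)`.

Let `t` be the first positive zero of `I_H`; it exists because positivity of `I_A` on `[0,t)`
passes to subsets by the recurrence, and `I_{K_2}(1/2) = 0`. If `H` is connected then
`I_B(t) > 0` for every proper `B ⊂ V`: otherwise a minimal zero `C ⊆ B` is connected, and for a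
neighbour `v ∉ C` of `C` induction gives `I_{C+v}(t) = -t I_{C ∖ N(v)}(t) < 0`, against
positivity on subsets. Hence `I_H'(t) = -∑_v I_{V ∖ N[v]}(t) < 0`, so `t` is not a local minimum
and `I_H` changes sign there.
-/

open MeasureTheory
open scoped Classical

section RealFunctions

open Set

variable {f : ℝ → ℝ} {t : ℝ}

theorem nonneg_of_forall_mem_Ico_pos (hf : Continuous f) (ht : 0 < t)
    (h : ∀ z ∈ Ico 0 t, 0 < f z) : 0 ≤ f t := by
  have hcl : Icc 0 t ⊆ closure (Ico 0 t) := (closure_Ico ht.ne).ge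
  exact (isClosed_le continuous_const hf).closure_subset_iff.2 (fun z hz => (h z hz).le)
    (hcl ⟨ht.le, le_rfl⟩)

theorem exists_first_zero (hf : Continuous f) (h0 : 0 < f 0) {y : ℝ} (hy : 0 ≤ y)
    (hfy : f y ≤ 0) : ∃ t ∈ Ioc 0 y, f t = 0 ∧ ∀ z ∈ Ico 0 t, 0 < f z := by
  set Z := {z ∈ Icc 0 y | f z ≤ 0}
  have hZ : IsClosed Z := isClosed_Icc.inter (isClosed_le hf continuous_const)
  have htZ : sInf Z ∈ Z := hZ.csInf_mem ⟨y, ⟨hy, le_rfl⟩, hfy⟩ ⟨0, fun z hz => hz.1.1⟩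
  have ht : 0 < sInf Z := by
    refine htZ.1.1.lt_of_ne fun h => ?_
    have := htZ.2
    rw [← h] at this
    exact this.not_gt h0
  have hbelow : ∀ z ∈ Ico 0 (sInf Z), 0 < f z := fun z hz => not_le.1 fun hfz =>
    have hzZ : z ∈ Z := ⟨⟨hz.1, hz.2.le.trans htZ.1.2⟩, hfz⟩
    (csInf_le ⟨0, fun z hz => hz.1.1⟩ hzZ).not_gt hz.2
  exact ⟨sInf Z, ⟨ht, htZ.1.2⟩, le_antisymm htZ.2 (nonneg_of_forall_mem_Ico_pos hf ht hbelow),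
    hbelow⟩

theorem exists_neg_of_hasDerivAt_neg {f' : ℝ} (ht : 0 < t) (hpos : ∀ z ∈ Ico 0 t, 0 < f z)
    (hft : f t = 0) (hf : HasDerivAt f f' t) (hf' : f' < 0) : ∃ s > t, f s < 0 := by
  by_contra! h
  have hmin : IsLocalMin f t := by
    filter_upwards [Ioi_mem_nhds ht] with z hz
    rcases lt_or_ge z t with hzt | htz
    · exact hft ▸ (hpos z ⟨hz.le, hzt⟩).le
    · rcases htz.eq_or_lt with rfl | htz
      · exact le_rfl
      · exact hft ▸ h z htz
  exact hf'.ne (hmin.hasDerivAt_eq_zero hf)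

end RealFunctions

namespace SimpleGraph

open Finset

variable {V : Type*} (H : SimpleGraph V)

noncomputable def indepSetsIn (A : Finset V) : Finset (Finset V) :=
  {S ∈ A.powerset | H.IsIndepSet (S : Set V)}

noncomputable def indepPolyOn (A : Finset V) (x : ℝ) : ℝ :=
  ∑ S ∈ H.indepSetsIn A, (-x) ^ #S

variable {H}

@[simp]
theorem mem_indepSetsIn {A S : Finset V} :
    S ∈ H.indepSetsIn A ↔ S ⊆ A ∧ H.IsIndepSet (S : Set V) := by
  simp [indepSetsIn]

@[simp]
theorem indepPolyOn_empty (x : ℝ) : H.indepPolyOn ∅ x = 1 := by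
  rw [indepPolyOn, indepSetsIn, powerset_empty, filter_singleton, if_pos (by simp)]
  simp

@[simp]
theorem indepPolyOn_zero (A : Finset V) : H.indepPolyOn A 0 = 1 := by
  rw [indepPolyOn, sum_eq_single_of_mem ∅ (by simp [Set.pairwise_empty])]
  · simp
  · intro S _ hS
    simp [zero_pow (card_ne_zero.2 (nonempty_iff_ne_empty.2 hS))]

theorem continuous_indepPolyOn (A : Finset V) : Continuous (H.indepPolyOn A) := by
  unfold indepPolyOn
  fun_prop

theorem isIndepSet_insert {S : Finset V} {v : V} :
    H.IsIndepSet (insert v S : Finset V) ↔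
      H.IsIndepSet (S : Set V) ∧ ∀ w ∈ S, ¬H.Adj v w := by
  rw [coe_insert, IsIndepSet, Set.pairwise_insert]
  refine and_congr_right fun _ => ⟨fun h w hw hvw => (h w hw hvw.ne).1 hvw, ?_⟩
  exact fun h w hw _ => ⟨h w hw, fun hwv => h w hw hwv.symm⟩

theorem sum_indepSetsIn_insert_mem {C : Finset V} {v : V} (hv : v ∉ C) (f : Finset V → ℝ) :
    ∑ S ∈ H.indepSetsIn (insert v C) with v ∈ S, f S =
      ∑ T ∈ H.indepSetsIn {w ∈ C | ¬H.Adj v w}, f (insert v T) := by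
  symm
  refine sum_nbij' (insert v) (fun S => S.erase v) ?_ ?_ ?_ ?_ (fun _ _ => rfl)
  · intro T hT
    simp only [mem_indepSetsIn, subset_iff, mem_filter] at hT ⊢
    exact ⟨⟨insert_subset_insert v (fun w hw => (hT.1 hw).1), isIndepSet_insert.2
      ⟨hT.2, fun w hw => (hT.1 hw).2⟩⟩, mem_insert_self v T⟩
  · intro S hS
    obtain ⟨hS, hvS⟩ := mem_filter.1 hS
    obtain ⟨hSC, hSi⟩ := mem_indepSetsIn.1 hS
    rw [← insert_erase hvS, isIndepSet_insert] at hSi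
    refine mem_indepSetsIn.2 ⟨fun w hw => mem_filter.2 ⟨?_, hSi.2 w hw⟩, hSi.1⟩
    exact (mem_insert.1 (hSC (mem_of_mem_erase hw))).resolve_left (ne_of_mem_erase hw)
  · intro T hT
    refine erase_insert fun hvT => ?_
    exact hv (mem_filter.1 ((mem_indepSetsIn.1 hT).1 hvT)).1
  · intro S hS
    exact insert_erase (mem_filter.1 hS).2

theorem indepPolyOn_insert {C : Finset V} {v : V} (hv : v ∉ C) (x : ℝ) :
    H.indepPolyOn (insert v C) x =
      H.indepPolyOn C x - x * H.indepPolyOn {w ∈ C | ¬H.Adj v w} x := by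
  have hnotMem : {S ∈ H.indepSetsIn (insert v C) | v ∉ S} = H.indepSetsIn C := by
    ext S
    simp only [mem_filter, mem_indepSetsIn]
    refine ⟨fun ⟨⟨hS, hSi⟩, hvS⟩ => ⟨(subset_insert_iff_of_notMem hvS).1 hS, hSi⟩,
      fun ⟨hS, hSi⟩ => ⟨⟨hS.trans (subset_insert v C), hSi⟩, fun hvS => hv (hS hvS)⟩⟩
  rw [indepPolyOn, ← sum_filter_not_add_sum_filter _ (v ∈ ·), hnotMem,
    sum_indepSetsIn_insert_mem hv, indepPolyOn, indepPolyOn, mul_sum, sub_eq_add_neg,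
    ← sum_neg_distrib]
  congr 1
  refine sum_congr rfl fun T hT => ?_
  have hvT : v ∉ T := fun hvT => hv (mem_filter.1 ((mem_indepSetsIn.1 hT).1 hvT)).1
  rw [card_insert_of_notMem hvT, pow_succ]
  ring

theorem hasDerivAt_indepPolyOn (A : Finset V) (x : ℝ) :
    HasDerivAt (H.indepPolyOn A)
      (-∑ v ∈ A, H.indepPolyOn {w ∈ A.erase v | ¬H.Adj v w} x) x := by
  have hterm (S : Finset V) :
      HasDerivAt (fun y : ℝ => (-y) ^ #S) (-(#S * (-x) ^ (#S - 1))) x := by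
    simpa using (hasDerivAt_id x).fun_neg.fun_pow #S
  refine (HasDerivAt.fun_sum fun S _ => hterm S).congr_deriv ?_
  rw [sum_neg_distrib, neg_inj]
  have hcard (S : Finset V) : (#S : ℝ) * (-x) ^ (#S - 1) = ∑ v ∈ S, (-x) ^ (#S - 1) := by
    simp
  simp_rw [hcard]
  rw [sum_comm' (t' := A) (s' := fun v => {S ∈ H.indepSetsIn A | v ∈ S})]
  · refine sum_congr rfl fun v hv => ?_
    have hvA : v ∉ A.erase v := notMem_erase v A
    rw [indepPolyOn, ← insert_erase hv, sum_indepSetsIn_insert_mem hvA, insert_erase hv]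
    refine sum_congr rfl fun T hT => ?_
    have hvT : v ∉ T := fun hvT => hvA (mem_filter.1 ((mem_indepSetsIn.1 hT).1 hvT)).1
    rw [card_insert_of_notMem hvT, Nat.add_sub_cancel]
  · intro S v
    simp only [mem_filter, mem_indepSetsIn]
    exact ⟨fun ⟨hS, hv⟩ => ⟨⟨hS, hv⟩, hS.1 hv⟩, fun ⟨hS, _⟩ => hS⟩

theorem indepPolyOn_union {A B : Finset V} (hd : Disjoint A B)
    (hAB : ∀ a ∈ A, ∀ b ∈ B, ¬H.Adj a b) (x : ℝ) :
    H.indepPolyOn (A ∪ B) x = H.indepPolyOn A x * H.indepPolyOn B x := by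
  induction A using Finset.strongInduction with
  | H A ih =>
  obtain rfl | ⟨v, hv⟩ := A.eq_empty_or_nonempty
  · simp
  have hvA : v ∉ A.erase v := notMem_erase v A
  have hvB : v ∉ B := Finset.disjoint_left.1 hd hv
  have hsub {C : Finset V} (hC : C ⊆ A.erase v) :=
    ih C (hC.trans_ssubset (erase_ssubset hv)) (hd.mono_left (hC.trans (erase_subset v A)))
      fun a ha => hAB a (mem_of_mem_erase (hC ha))
  have hfilter : {w ∈ A.erase v ∪ B | ¬H.Adj v w} = {w ∈ A.erase v | ¬H.Adj v w} ∪ B := by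
    rw [filter_union, filter_true_of_mem (hAB v hv)]
  have hA : A ∪ B = insert v (A.erase v ∪ B) := by rw [← insert_union, insert_erase hv]
  have hIA : H.indepPolyOn A x = H.indepPolyOn (A.erase v) x -
      x * H.indepPolyOn {w ∈ A.erase v | ¬H.Adj v w} x := by
    rw [← indepPolyOn_insert hvA, insert_erase hv]
  rw [hA, indepPolyOn_insert (by simp [hvA, hvB]), hfilter, hIA,
    hsub subset_rfl, hsub (filter_subset _ _)]
  ring

theorem indepPolyOn_singleton (v : V) (x : ℝ) : H.indepPolyOn {v} x = 1 - x := by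
  rw [← insert_empty, indepPolyOn_insert (notMem_empty v)]
  simp

theorem indepPolyOn_pair {u v : V} (huv : H.Adj u v) (x : ℝ) :
    H.indepPolyOn {u, v} x = 1 - 2 * x := by
  rw [indepPolyOn_insert (by simpa using huv.ne), filter_singleton, if_neg (not_not.2 huv)]
  simp [indepPolyOn_singleton]
  ring

theorem indepPolyOn_pos_of_subset {A B : Finset V} {t : ℝ} (hBA : B ⊆ A)
    (hA : ∀ z ∈ Set.Ico 0 t, 0 < H.indepPolyOn A z) :
    ∀ z ∈ Set.Ico 0 t, 0 < H.indepPolyOn B z := by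
  induction A using Finset.strongInduction generalizing B t with
  | H A ih =>
  obtain rfl | hBA := hBA.eq_or_ssubset
  · exact hA
  obtain ⟨v, hvA, hvB⟩ := exists_of_ssubset hBA
  refine ih _ (erase_ssubset hvA) (subset_erase.2 ⟨hBA.subset, hvB⟩) fun y hy => ?_
  by_contra! hy0
  obtain ⟨s, hs, hs0, hbelow⟩ :=
    exists_first_zero (continuous_indepPolyOn _) (by simp) hy.1 hy0
  have hN : 0 ≤ H.indepPolyOn {w ∈ A.erase v | ¬H.Adj v w} s :=
    nonneg_of_forall_mem_Ico_pos (continuous_indepPolyOn _) hs.1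
      (ih _ (erase_ssubset hvA) (filter_subset _ _) hbelow)
  have hIA := indepPolyOn_insert (H := H) (notMem_erase v A) s
  rw [insert_erase hvA, hs0] at hIA
  have := hA s ⟨hs.1.le, hs.2.trans_lt hy.2⟩
  nlinarith [hs.1]

variable (H) in
/-- Connectivity of the induced subgraph `H[A]`, phrased through edge cuts. -/
def IsLinked (A : Finset V) : Prop :=
  ∀ B ⊂ A, B.Nonempty → ∃ b ∈ B, ∃ a ∈ A \ B, H.Adj b a

theorem Connected.isLinked_univ [Fintype V] (h : H.Connected) : H.IsLinked univ := by
  intro B hB ⟨b, hb⟩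
  obtain ⟨a, -, ha⟩ := exists_of_ssubset hB
  obtain ⟨d, -, hd1, hd2⟩ := (h.preconnected b a).some.exists_boundary_dart (B : Set V) hb ha
  exact ⟨d.fst, hd1, d.snd, by simpa using hd2, d.adj⟩

theorem exists_isLinked_subset_indepPolyOn_eq_zero {B : Finset V} {t : ℝ}
    (hB : H.indepPolyOn B t = 0) :
    ∃ C ⊆ B, C.Nonempty ∧ H.IsLinked C ∧ H.indepPolyOn C t = 0 := by
  obtain ⟨C, hC, hmin⟩ :=
    exists_min_image {C ∈ B.powerset | H.indepPolyOn C t = 0} card ⟨B, by simpa⟩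
  rw [mem_filter, mem_powerset] at hC
  have hmin' : ∀ D ⊂ C, H.indepPolyOn D t ≠ 0 := fun D hD hD0 =>
    (card_lt_card hD).not_ge <|
      hmin D (mem_filter.2 ⟨mem_powerset.2 (hD.subset.trans hC.1), hD0⟩)
  refine ⟨C, hC.1, nonempty_iff_ne_empty.2 ?_, fun D hDC hD => ?_, hC.2⟩
  · rintro rfl
    simp at hC
  by_contra! hcut
  have hsplit := indepPolyOn_union (H := H) disjoint_sdiff hcut t
  rw [union_sdiff_of_subset hDC.subset, hC.2] at hsplit
  rcases mul_eq_zero.1 hsplit.symm with h | h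
  · exact hmin' D hDC h
  · exact hmin' _ (sdiff_ssubset hDC.subset hD) h

theorem indepPolyOn_pos_of_ssubset {A B : Finset V} {t : ℝ} (hA : H.IsLinked A) (ht : 0 < t)
    (hpos : ∀ z ∈ Set.Ico 0 t, 0 < H.indepPolyOn A z) (hBA : B ⊂ A) :
    0 < H.indepPolyOn B t := by
  induction A using Finset.strongInduction generalizing B with
  | H A ih =>
  have hnonneg {C : Finset V} (hC : C ⊆ A) : 0 ≤ H.indepPolyOn C t :=
    nonneg_of_forall_mem_Ico_pos (continuous_indepPolyOn C) ht (indepPolyOn_pos_of_subset hC hpos)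
  refine (hnonneg hBA.subset).lt_of_ne' fun hB0 => ?_
  obtain ⟨C, hCB, hCne, hC, hC0⟩ := exists_isLinked_subset_indepPolyOn_eq_zero hB0
  have hCA : C ⊂ A := hCB.trans_ssubset hBA
  obtain ⟨c, hc, v, hv, hcv⟩ := hA C hCA hCne
  rw [mem_sdiff] at hv
  have hN : 0 < H.indepPolyOn {w ∈ C | ¬H.Adj v w} t :=
    ih C hCA hC (indepPolyOn_pos_of_subset hCA.subset hpos)
      (filter_ssubset.2 ⟨c, hc, not_not.2 hcv.symm⟩)
  have hvC := hnonneg (insert_subset hv.1 hCA.subset)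
  rw [indepPolyOn_insert hv.2, hC0] at hvC
  nlinarith [mul_pos ht hN]

theorem IsLinked.exists_indepPolyOn_neg {A : Finset V} (hA : H.IsLinked A) {u v : V}
    (hu : u ∈ A) (hv : v ∈ A) (huv : H.Adj u v) : ∃ x > 0, H.indepPolyOn A x < 0 := by
  obtain ⟨y, hy, hy0⟩ : ∃ y ∈ Set.Ico (0 : ℝ) 1, H.indepPolyOn A y ≤ 0 := by
    by_contra! h
    have := indepPolyOn_pos_of_subset (insert_subset hu (singleton_subset_iff.2 hv)) h (1 / 2)
      (by norm_num)
    rw [indepPolyOn_pair huv] at this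
    norm_num at this
  obtain ⟨t, ht, ht0, hbelow⟩ :=
    exists_first_zero (continuous_indepPolyOn A) (by simp) hy.1 hy0
  have hN (w : V) (hw : w ∈ A) : 0 < H.indepPolyOn {w' ∈ A.erase w | ¬H.Adj w w'} t :=
    indepPolyOn_pos_of_ssubset hA ht.1 hbelow
      ((filter_subset _ _).trans_ssubset (erase_ssubset hw))
  obtain ⟨s, hts, hs⟩ := exists_neg_of_hasDerivAt_neg ht.1 hbelow ht0
    (hasDerivAt_indepPolyOn A t) (neg_neg_of_pos (sum_pos hN ⟨u, hu⟩))
  exact ⟨s, ht.1.trans hts, hs⟩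

theorem indepPolyOn_univ_eq_indepPoly {V : Type} [Fintype V] (H : SimpleGraph V) (x : ℝ) :
    H.indepPolyOn univ x = indepPoly H x := by
  rw [indepPolyOn, indepPoly, ← sum_fiberwise_of_maps_to (g := card)
    (t := range (Fintype.card V + 1)) fun S _ => mem_range_succ_iff.2 (card_le_univ S)]
  refine sum_congr rfl fun k _ => ?_
  rw [_root_.indepNum, ← nsmul_eq_mul, ← sum_const, indepSetsIn, powerset_univ, filter_filter]
  refine sum_congr (filter_congr fun S _ => ?_) fun S hS => by rw [(mem_filter.1 hS).2.1]
  simp only [IsIndepSet, Set.Pairwise, mem_coe]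
  exact ⟨fun ⟨h, hk⟩ => ⟨hk, fun u hu v hv huv => h hu hv huv.ne huv⟩,
    fun ⟨hk, h⟩ => ⟨fun u hu v hv _ => h u hu v hv, hk⟩⟩

theorem Connected.exists_indepPoly_neg {V : Type} [Fintype V] {H : SimpleGraph V}
    (hconn : H.Connected) (hedge : H.edgeSet.Nonempty) : ∃ x > 0, indepPoly H x < 0 := by
  obtain ⟨e, he⟩ := hedge
  induction e using Sym2.ind with
  | h u v =>
  obtain ⟨x, hx, hneg⟩ :=
    hconn.isLinked_univ.exists_indepPolyOn_neg (Finset.mem_univ u) (Finset.mem_univ v) he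
  exact ⟨x, hx, H.indepPolyOn_univ_eq_indepPoly x ▸ hneg⟩

section Finite

variable [Fintype V] [DecidableRel H.Adj]

theorem card_edges_meeting_eq_sum_degree {T : Finset V} (hT : H.IsIndepSet (T : Set V)) :
    #{e ∈ H.edgeFinset | ∃ v ∈ T, v ∈ e} = ∑ v ∈ T, H.degree v := by
  have hbiUnion :
      {e ∈ H.edgeFinset | ∃ v ∈ T, v ∈ e} = T.biUnion fun v => H.incidenceFinset v := by
    ext e
    simp only [mem_filter, mem_biUnion, incidenceFinset_eq_filter]
    tauto
  rw [hbiUnion, card_biUnion]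
  · simp
  intro v hv w hw hvw
  refine Finset.disjoint_left.2 fun e hev hew => ?_
  simp only [incidenceFinset_eq_filter, mem_filter] at hev hew
  have he : e = s(v, w) := (Sym2.mem_and_mem_iff hvw).1 ⟨hev.2, hew.2⟩
  exact hT hv hw hvw (by simpa [he] using hev.1)

end Finite

end SimpleGraph

noncomputable def blockKernel (p a b : ℝ) : ℝ :=
  if a ≤ p then (if b ≤ p then 0 else -1) else (if b ≤ p then -1 else 1)

theorem blockKernel_comm (p a b : ℝ) : blockKernel p a b = blockKernel p b a := by
  unfold blockKernel
  split_ifs <;> rfl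

theorem measurable_blockKernel (p : ℝ) : Measurable (Function.uncurry (blockKernel p)) := by
  unfold blockKernel Function.uncurry
  refine Measurable.ite (measurableSet_le measurable_fst measurable_const) ?_ ?_ <;>
    exact Measurable.ite (measurableSet_le measurable_snd measurable_const)
      measurable_const measurable_const

theorem abs_blockKernel_le_one (p a b : ℝ) : |blockKernel p a b| ≤ 1 := by
  unfold blockKernel
  split_ifs <;> norm_num

open Finset in
theorem setIntegral_unitCube_comp_filter_le {V : Type*} [Fintype V] (G : Finset V → ℝ) {p : ℝ}
    (hp0 : 0 ≤ p) (hp1 : p ≤ 1) :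
    ∫ x in Set.univ.pi fun _ : V => Set.Icc (0 : ℝ) 1, G {v | x v ≤ p} =
      ∑ S, G S * (p ^ #S * (1 - p) ^ #Sᶜ) := by
  set box := Set.univ.pi fun _ : V => Set.Icc (0 : ℝ) 1
  let cell (S : Finset V) : Set (V → ℝ) :=
    Set.univ.pi fun v => if v ∈ S then Set.Icc 0 p else Set.Ioc p 1
  have hcell (S : Finset V) : MeasurableSet (cell S) :=
    MeasurableSet.univ_pi fun v => by split_ifs <;> measurability
  have hmem {x : V → ℝ} (hx : x ∈ box) (S : Finset V) :
      x ∈ cell S ↔ ({v | x v ≤ p} : Finset V) = S := by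
    simp only [cell, Set.mem_pi, Set.mem_univ, true_implies, Finset.ext_iff, mem_filter,
      mem_univ, true_and]
    refine forall_congr' fun v => ?_
    have hxv := hx v (Set.mem_univ v)
    split_ifs with hv <;> simp [hv, hxv.1, hxv.2]
  have hvol (S : Finset V) : volume.real (cell S ∩ box) = p ^ #S * (1 - p) ^ #Sᶜ := by
    have hsub : cell S ⊆ box := Set.pi_mono fun v _ => by
      split_ifs
      · exact Set.Icc_subset_Icc le_rfl hp1
      · exact fun z hz => ⟨hp0.trans hz.1.le, hz.2⟩
    rw [Set.inter_eq_left.2 hsub, measureReal_def, volume_pi_pi, ENNReal.toReal_prod]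
    have hside (v : V) : (volume (if v ∈ S then Set.Icc 0 p else Set.Ioc p 1)).toReal =
        if v ∈ S then p else 1 - p := by
      split_ifs <;> simp [hp0, hp1]
    simp only [hside, prod_ite, prod_const, filter_mem_eq_inter, univ_inter,
      filter_notMem_eq_sdiff, compl_eq_univ_sdiff]
  have hbox : volume box ≠ ⊤ := (isCompact_univ_pi fun _ => isCompact_Icc).measure_ne_top
  calc ∫ x in box, G {v | x v ≤ p}
      = ∫ x in box, ∑ S, (cell S).indicator (fun _ => G S) x := by
        refine setIntegral_congr_fun (MeasurableSet.univ_pi fun _ => measurableSet_Icc)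
          fun x hx => ?_
        rw [sum_eq_single ({v | x v ≤ p} : Finset V)]
        · exact (Set.indicator_of_mem ((hmem hx _).2 rfl) fun _ => G _).symm
        · exact fun S _ hS => Set.indicator_of_notMem (fun h => hS ((hmem hx S).1 h).symm) _
        · simp
    _ = ∑ S, G S * (p ^ #S * (1 - p) ^ #Sᶜ) := by
        have : IsFiniteMeasure (volume.restrict box) := isFiniteMeasure_restrict.2 hbox
        rw [integral_finsetSum _ fun S _ => (integrable_const (G S)).indicator (hcell S)]
        refine sum_congr rfl fun S _ => ?_
        rw [integral_indicator_const _ (hcell S), measureReal_restrict_apply (hcell S), hvol,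
          smul_eq_mul, mul_comm]

namespace SimpleGraph

open Finset

variable {V : Type} [Fintype V] {H : SimpleGraph V} [DecidableRel H.Adj]

theorem prod_blockKernel_eq {p : ℝ} {x : V → ℝ} {T : Finset V}
    (hT : ∀ v, v ∈ T ↔ x v ≤ p) :
    ∏ e ∈ (Set.toFinite H.edgeSet).toFinset,
      Sym2.lift ⟨fun a b => blockKernel p (x a) (x b),
        fun a b => blockKernel_comm p (x a) (x b)⟩ e =
      if H.IsIndepSet (T : Set V) then (-1) ^ #{e ∈ H.edgeFinset | ∃ v ∈ T, v ∈ e}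
      else 0 := by
  have hval (a b : V) : blockKernel p (x a) (x b) =
      if a ∈ T ∧ b ∈ T then 0 else if a ∈ T ∨ b ∈ T then -1 else 1 := by
    unfold blockKernel
    simp only [hT]
    split_ifs <;> first | rfl | (exfalso; tauto)
  rw [Set.toFinite_toFinset]
  change ∏ e ∈ H.edgeFinset, _ = _
  split_ifs with hind
  · rw [prod_congr rfl (g := fun e => if ∃ v ∈ T, v ∈ e then (-1 : ℝ) else 1), prod_ite,
      prod_const, prod_const_one, mul_one]
    intro e he
    induction e using Sym2.ind with
    | h a b =>
    have hab : ¬(a ∈ T ∧ b ∈ T) := fun h => hind h.1 h.2 (H.ne_of_adj (by simpa using he))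
      (by simpa using he)
    simp only [Sym2.lift_mk, hval, if_neg hab, Sym2.mem_iff]
    exact if_congr (by grind) rfl rfl
  · simp only [IsIndepSet, Set.Pairwise, not_forall, not_not] at hind
    obtain ⟨a, ha, b, hb, -, hab⟩ := hind
    rw [mem_coe] at ha hb
    exact prod_eq_zero (i := s(a, b)) (by simpa using hab) (by simp [hval, ha, hb])

theorem graphDensity_blockKernel (hodd : ∀ v, Odd (H.degree v)) {p : ℝ} (hp0 : 0 ≤ p)
    (hp1 : p < 1) :
    graphDensity H (blockKernel p) (blockKernel_comm p) =
      (1 - p) ^ Fintype.card V * indepPoly H (p / (1 - p)) := by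
  let G (S : Finset V) : ℝ := if H.IsIndepSet (S : Set V) then (-1) ^ #S else 0
  have hprod (x : V → ℝ) :
      ∏ e ∈ (Set.toFinite H.edgeSet).toFinset,
        Sym2.lift ⟨fun a b => blockKernel p (x a) (x b),
          fun a b => blockKernel_comm p (x a) (x b)⟩ e = G {v | x v ≤ p} := by
    rw [prod_blockKernel_eq (T := {v | x v ≤ p}) fun v => by simp]
    by_cases hind : H.IsIndepSet (({v | x v ≤ p} : Finset V) : Set V)
    · simp only [G, if_pos hind]
      rw [card_edges_meeting_eq_sum_degree hind, ← prod_pow_eq_pow_sum,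
        prod_congr rfl fun v _ => (hodd v).neg_one_pow, prod_const]
    · simp only [G, if_neg hind]
  rw [graphDensity]
  simp_rw [hprod]
  rw [setIntegral_unitCube_comp_filter_le G hp0 hp1.le, ← indepPolyOn_univ_eq_indepPoly,
    indepPolyOn, mul_sum, indepSetsIn, powerset_univ, sum_filter]
  refine sum_congr rfl fun S _ => ?_
  by_cases hS : H.IsIndepSet (S : Set V)
  · have hsplit : (1 - p) ^ Fintype.card V = (1 - p) ^ #S * (1 - p) ^ #Sᶜ := by
      rw [← pow_add, card_add_card_compl]
    simp only [G, if_pos hS]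
    rw [hsplit, neg_pow (p / (1 - p)), div_pow]
    field_simp [(sub_pos.2 hp1).ne']
  · simp only [G, if_neg hS, zero_mul]

end SimpleGraph

/-- A connected graph with at least one edge in which all degrees are odd is not
positive: some symmetric bounded measurable kernel gives negative density. -/
theorem stmt2 {V : Type} [Fintype V] (H : SimpleGraph V) [DecidableRel H.Adj]
    (hconn : H.Connected) (hedge : H.edgeSet.Nonempty)
    (hodd : ∀ v : V, Odd (H.degree v)) :
    ∃ (W : ℝ → ℝ → ℝ) (hsym : ∀ a b, W a b = W b a),
      Measurable (Function.uncurry W) ∧ (∃ C, ∀ x y, |W x y| ≤ C) ∧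
        graphDensity H W hsym < 0 := by
  obtain ⟨x, hx, hneg⟩ := hconn.exists_indepPoly_neg hedge
  set p := x / (1 + x)
  have hp0 : 0 ≤ p := by positivity
  have hp1 : p < 1 := (div_lt_one (by positivity)).2 (by linarith)
  have hpx : p / (1 - p) = x := by
    simp only [p]
    field_simp
    ring
  refine ⟨blockKernel p, blockKernel_comm p, measurable_blockKernel p,
    ⟨1, abs_blockKernel_le_one p⟩, ?_⟩
  rw [SimpleGraph.graphDensity_blockKernel hodd hp0 hp1, hpx]
  exact mul_neg_of_pos_of_neg (pow_pos (sub_pos.2 hp1) _) hneg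
end

section
/- If H is a connected graph with at least one edge, then the independence polynomial I_H(x) = Σ_{k≥0} i_k(H)(-x)^k has a real root in the interval (0,1). -/
open MeasureTheory
open scoped Classical

noncomputable def Jpoly {V : Type} [Fintype V] (H : SimpleGraph V) (S : Finset V) (x : ℝ) : ℝ :=
  ∑ A ∈ S.powerset.filter (fun A => ∀ u ∈ A, ∀ v ∈ A, ¬ H.Adj u v), (-x) ^ A.card

lemma Jpoly_empty {V : Type} [Fintype V] (H : SimpleGraph V) (x : ℝ) :
    Jpoly H ∅ x = 1 := by
  unfold Jpoly
  rw [Finset.powerset_empty, Finset.filter_singleton]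
  simp

lemma Jpoly_zero {V : Type} [Fintype V] (H : SimpleGraph V) (S : Finset V) :
    Jpoly H S 0 = 1 := by
  unfold Jpoly
  rw [Finset.sum_eq_single (∅ : Finset V)]
  · simp
  · intro A hA hAne
    rw [neg_zero, zero_pow]
    simpa [Finset.card_eq_zero] using hAne
  · intro h
    exact absurd (by simp : (∅ : Finset V) ∈ _) h

lemma Jpoly_continuous {V : Type} [Fintype V] (H : SimpleGraph V) (S : Finset V) :
    Continuous (Jpoly H S) := by
  unfold Jpoly
  exact continuous_finset_sum _ fun A _ => (continuous_neg.pow _)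

lemma Jpoly_rec {V : Type} [Fintype V] (H : SimpleGraph V) {S : Finset V} {v : V}
    (hv : v ∈ S) (x : ℝ) :
    Jpoly H S x = Jpoly H (S.erase v) x
      - x * Jpoly H ((S.erase v).filter (fun u => ¬ H.Adj v u)) x := by
  classical
  unfold Jpoly
  rw [← Finset.sum_filter_add_sum_filter_not
    (S.powerset.filter (fun A => ∀ u ∈ A, ∀ w ∈ A, ¬ H.Adj u w)) (fun A => v ∈ A)]
  have h1 : (S.powerset.filter (fun A => ∀ u ∈ A, ∀ w ∈ A, ¬ H.Adj u w)).filter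
      (fun A => v ∉ A) = (S.erase v).powerset.filter (fun A => ∀ u ∈ A, ∀ w ∈ A, ¬ H.Adj u w) := by
    ext A
    simp only [Finset.mem_filter, Finset.mem_powerset, Finset.subset_erase]
    tauto
  have h2 : ∑ A ∈ (S.powerset.filter (fun A => ∀ u ∈ A, ∀ w ∈ A, ¬ H.Adj u w)).filter
      (fun A => v ∈ A), (-x) ^ A.card
      = (-x) * ∑ B ∈ ((S.erase v).filter (fun u => ¬ H.Adj v u)).powerset.filter
          (fun A => ∀ u ∈ A, ∀ w ∈ A, ¬ H.Adj u w), (-x) ^ B.card := by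
    rw [Finset.mul_sum]
    refine Finset.sum_nbij' (fun A => A.erase v) (fun B => insert v B) ?_ ?_ ?_ ?_ ?_
    · intro A hA
      simp only [Finset.mem_filter, Finset.mem_powerset] at hA ⊢
      obtain ⟨⟨hAS, hind⟩, hvA⟩ := hA
      refine ⟨?_, fun u hu w hw => hind u (Finset.mem_of_mem_erase hu) w (Finset.mem_of_mem_erase hw)⟩
      intro u hu
      have huA := Finset.mem_of_mem_erase hu
      have hune := Finset.ne_of_mem_erase hu
      refine Finset.mem_filter.mpr ⟨Finset.mem_erase.mpr ⟨hune, hAS huA⟩, hind v hvA u huA⟩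
    · intro B hB
      simp only [Finset.mem_filter, Finset.mem_powerset] at hB ⊢
      obtain ⟨hBN, hind⟩ := hB
      have hvB : v ∉ B := by
        intro hvB
        have := hBN hvB
        exact (Finset.mem_erase.mp (Finset.mem_filter.mp this).1).1 rfl
      constructor
      · constructor
        · intro u hu
          rcases Finset.mem_insert.mp hu with rfl | hu
          · exact hv
          · exact Finset.mem_of_mem_erase (Finset.mem_filter.mp (hBN hu)).1
        · intro u hu w hw h
          rcases Finset.mem_insert.mp hu with huv | hu
          · rcases Finset.mem_insert.mp hw with hwv | hw
            · rw [huv, hwv] at h; exact H.irrefl h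
            · rw [huv] at h; exact (Finset.mem_filter.mp (hBN hw)).2 h
          · rcases Finset.mem_insert.mp hw with hwv | hw
            · rw [hwv] at h; exact (Finset.mem_filter.mp (hBN hu)).2 h.symm
            · exact hind u hu w hw h
      · exact Finset.mem_insert_self v B
    · intro A hA
      simp only [Finset.mem_filter] at hA
      exact Finset.insert_erase hA.2
    · intro B hB
      simp only [Finset.mem_filter, Finset.mem_powerset] at hB
      have hvB : v ∉ B := by
        intro hvB
        exact (Finset.mem_erase.mp (Finset.mem_filter.mp (hB.1 hvB)).1).1 rfl
      exact Finset.erase_insert hvB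
    · intro A hA
      simp only [Finset.mem_filter] at hA
      rw [Finset.card_erase_of_mem hA.2, ← pow_succ']
      congr 1
      have : 1 ≤ A.card := Finset.card_pos.mpr ⟨v, hA.2⟩
      omega
  rw [h1, h2]
  ring

lemma Jpoly_singleton {V : Type} [Fintype V] (H : SimpleGraph V) (u : V) (x : ℝ) :
    Jpoly H {u} x = 1 - x := by
  have := Jpoly_rec H (Finset.mem_singleton_self u) (x := x)
  rw [Finset.erase_singleton, Finset.filter_empty, Jpoly_empty] at this
  rw [this]; ring

lemma Jpoly_pair {V : Type} [Fintype V] (H : SimpleGraph V) {u v : V}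
    (hadj : H.Adj u v) (x : ℝ) :
    Jpoly H {u, v} x = 1 - 2 * x := by
  have hne : u ≠ v := hadj.ne
  have hv : v ∈ ({u, v} : Finset V) := by simp
  have hrec := Jpoly_rec H hv (x := x)
  have herase : ({u, v} : Finset V).erase v = {u} := by
    ext a
    simp only [Finset.mem_erase, Finset.mem_insert, Finset.mem_singleton]
    constructor
    · rintro ⟨hav, rfl | rfl⟩
      · rfl
      · exact absurd rfl hav
    · rintro rfl
      exact ⟨hne, Or.inl rfl⟩
  rw [herase] at hrec
  have hfil : ({u} : Finset V).filter (fun w => ¬ H.Adj v w) = ∅ := by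
    rw [Finset.filter_singleton, if_neg]
    simp [hadj.symm]
  rw [hfil, Jpoly_empty, Jpoly_singleton] at hrec
  rw [hrec]; ring

lemma Jpoly_mono {V : Type} [Fintype V] (H : SimpleGraph V) {x : ℝ} (hx : 0 ≤ x)
    (hpos : ∀ T : Finset V, 0 ≤ Jpoly H T x) :
    ∀ (n : ℕ) (S T : Finset V), S.card ≤ n → T ⊆ S → Jpoly H S x ≤ Jpoly H T x := by
  intro n
  induction n with
  | zero =>
    intro S T hS hTS
    have : S = ∅ := Finset.card_eq_zero.mp (Nat.le_zero.mp hS)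
    subst this
    rw [Finset.subset_empty.mp hTS]
  | succ n ih =>
    intro S T hS hTS
    by_cases hST : S ⊆ T
    · rw [Finset.Subset.antisymm hST hTS]
    · obtain ⟨v, hvS, hvT⟩ := Finset.not_subset.mp hST
      have hrec := Jpoly_rec H hvS (x := x)
      have h1 : Jpoly H S x ≤ Jpoly H (S.erase v) x := by
        rw [hrec]
        have := hpos ((S.erase v).filter (fun u => ¬ H.Adj v u))
        nlinarith
      refine h1.trans (ih (S.erase v) T ?_ ?_)
      · rw [Finset.card_erase_of_mem hvS]
        omega
      · exact Finset.subset_erase.mpr ⟨hTS, hvT⟩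

lemma indepPoly_eq_Jpoly {V : Type} [Fintype V] (H : SimpleGraph V) (x : ℝ) :
    indepPoly H x = Jpoly H Finset.univ x := by
  classical
  unfold indepPoly indepNum Jpoly
  rw [Finset.powerset_univ]
  have key : ∀ k, ((Finset.univ.filter fun s : Finset V =>
      s.card = k ∧ ∀ u ∈ s, ∀ v ∈ s, ¬ H.Adj u v).card : ℝ) * (-x) ^ k
      = ∑ A ∈ (Finset.univ.filter (fun A : Finset V => ∀ u ∈ A, ∀ v ∈ A, ¬ H.Adj u v)).filter
          (fun A => A.card = k), (-x) ^ A.card := by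
    intro k
    have hset : (Finset.univ.filter fun s : Finset V =>
        s.card = k ∧ ∀ u ∈ s, ∀ v ∈ s, ¬ H.Adj u v)
        = (Finset.univ.filter (fun A : Finset V => ∀ u ∈ A, ∀ v ∈ A, ¬ H.Adj u v)).filter
          (fun A => A.card = k) := by
      ext A
      simp only [Finset.mem_filter, Finset.mem_univ, true_and]
      tauto
    rw [hset]
    rw [Finset.sum_congr rfl (fun A hA => by
      rw [(Finset.mem_filter.mp hA).2])]
    rw [Finset.sum_const, nsmul_eq_mul]
  calc ∑ k ∈ Finset.range (Fintype.card V + 1),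
      ((Finset.univ.filter fun s : Finset V =>
        s.card = k ∧ ∀ u ∈ s, ∀ v ∈ s, ¬ H.Adj u v).card : ℝ) * (-x) ^ k
      = ∑ k ∈ Finset.range (Fintype.card V + 1),
        ∑ A ∈ (Finset.univ.filter (fun A : Finset V => ∀ u ∈ A, ∀ v ∈ A, ¬ H.Adj u v)).filter
          (fun A => A.card = k), (-x) ^ A.card := by
        exact Finset.sum_congr rfl fun k _ => key k
    _ = ∑ A ∈ Finset.univ.filter (fun A : Finset V => ∀ u ∈ A, ∀ v ∈ A, ¬ H.Adj u v),
        (-x) ^ A.card := by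
        apply Finset.sum_fiberwise_of_maps_to
        intro A _
        rw [Finset.mem_range]
        exact Nat.lt_succ_of_le (Finset.card_le_univ A)

lemma cont_inf' {ι : Type*} (s : Finset ι) (hs : s.Nonempty) (f : ι → ℝ → ℝ)
    (hf : ∀ i, Continuous (f i)) :
    Continuous fun x => s.inf' hs fun i => f i x := by
  induction hs using Finset.Nonempty.cons_induction with
  | singleton a => simpa using hf a
  | cons a s ha hs ih =>
    have heq : (fun x => (Finset.cons a s ha).inf' (Finset.cons_nonempty ha) fun i => f i x)
        = fun x => min (f a x) (s.inf' hs fun i => f i x) := by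
      funext x
      exact Finset.inf'_cons (α := ℝ) (s := s) (H := hs) (f := fun i => f i x) (b := a) (hb := ha)
    rw [heq]
    exact (hf a).min ih


/-- The independence polynomial of a connected graph with at least one edge has a real
root in `(0,1)`. -/
theorem stmt3 {V : Type} [Fintype V] (H : SimpleGraph V)
    (hconn : H.Connected) (hedge : H.edgeSet.Nonempty) :
    ∃ x ∈ Set.Ioo (0 : ℝ) 1, indepPoly H x = 0 := by
  classical
  obtain ⟨u, v, huv⟩ : ∃ u v, H.Adj u v := by
    obtain ⟨e, he⟩ := hedge
    revert he
    refine Sym2.ind (fun a b h => ⟨a, b, h⟩) e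
  have hne : Finset.Nonempty (Finset.univ : Finset (Finset V)) := ⟨∅, Finset.mem_univ _⟩
  set g : ℝ → ℝ := fun x => (Finset.univ : Finset (Finset V)).inf' hne (fun T => Jpoly H T x)
    with hgdef
  have hgcont : Continuous g := cont_inf' _ hne _ (fun T => Jpoly_continuous H T)
  set B : Set ℝ := {x : ℝ | 0 ≤ x ∧ g x ≤ 0} with hBdef
  have hBhalf : (1 / 2 : ℝ) ∈ B := by
    refine ⟨by norm_num, ?_⟩
    have h1 : g (1 / 2) ≤ Jpoly H {u, v} (1 / 2) :=
      Finset.inf'_le _ (Finset.mem_univ _)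
    rw [Jpoly_pair H huv] at h1
    linarith
  have hBne : B.Nonempty := ⟨1 / 2, hBhalf⟩
  have hBbd : BddBelow B := ⟨0, fun y hy => hy.1⟩
  have hBclosed : IsClosed B := by
    have : B = Set.Ici (0 : ℝ) ∩ {x | g x ≤ 0} := by
      ext y; simp [hBdef, Set.mem_Ici]
    rw [this]
    exact isClosed_Ici.inter (isClosed_le hgcont continuous_const)
  set r : ℝ := sInf B with hrdef
  have hrB : r ∈ B := hBclosed.csInf_mem hBne hBbd
  have hr0 : 0 ≤ r := hrB.1
  have hrhalf : r ≤ 1 / 2 := csInf_le hBbd hBhalf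
  have hg0 : g 0 = 1 := by
    rw [hgdef]
    simp only [Jpoly_zero]
    exact Finset.inf'_const hne 1
  have hrpos : 0 < r := by
    rcases lt_or_eq_of_le hr0 with h | h
    · exact h
    · exfalso
      have := hrB.2
      rw [← h, hg0] at this
      linarith
  have hpre : ∀ y, 0 ≤ y → y < r → 0 < g y := by
    intro y hy0 hyr
    by_contra hcon
    push_neg at hcon
    exact absurd (csInf_le hBbd ⟨hy0, hcon⟩) (not_le.mpr hyr)
  have hgr_nonneg : 0 ≤ g r := by
    have h1 : Set.Ico (0 : ℝ) r ⊆ {x | 0 ≤ g x} :=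
      fun y hy => (hpre y hy.1 hy.2).le
    have h2 : closure (Set.Ico (0 : ℝ) r) ⊆ {x | 0 ≤ g x} :=
      closure_minimal h1 (isClosed_le continuous_const hgcont)
    have h3 : r ∈ closure (Set.Ico (0 : ℝ) r) := by
      rw [closure_Ico (ne_of_lt hrpos)]
      exact ⟨hr0, le_refl r⟩
    exact h2 h3
  have hgr : g r = 0 := le_antisymm hrB.2 hgr_nonneg
  have hposT : ∀ T : Finset V, 0 ≤ Jpoly H T r := by
    intro T
    calc (0 : ℝ) = g r := hgr.symm
      _ ≤ Jpoly H T r := Finset.inf'_le _ (Finset.mem_univ _)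
  obtain ⟨T0, _, hT0⟩ := Finset.exists_mem_eq_inf' hne (fun T => Jpoly H T r)
  have hle : Jpoly H Finset.univ r ≤ 0 := by
    have h := Jpoly_mono H hr0 hposT (Finset.univ.card) Finset.univ T0
      (le_refl _) (Finset.subset_univ T0)
    rw [← hT0] at h
    exact le_of_le_of_eq h hgr
  refine ⟨r, ⟨hrpos, lt_of_le_of_lt hrhalf (by norm_num)⟩, ?_⟩
  rw [indepPoly_eq_Jpoly]
  exact le_antisymm hle (hposT Finset.univ)
end

section
/- Let ℋ be a connected 2-regular linear r-uniform hypergraph (every vertex lies in exactly 2 edges and any two edges share at most one vertex). Then for every proper non-empty subhypergraph F ⊊ ℋ (obtained by deleting at least one edge), F has a vertex of odd degree. Consequently, with U(x₁,…,x_r) = x₁⋯x_r on {-1,+1}^r with uniform measure, t_F(U) = 0 for all non-empty proper subgraphs F of ℋ, while t_ℋ(U) = 1. -/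
open scoped Classical

private lemma sum_eval7 {V : Type} [Fintype V] [DecidableEq V] (F : Finset (Finset V)) :
    (∑ x : V → Bool, ∏ e ∈ F, ∏ v ∈ e, (if x v then (1 : ℝ) else -1))
      = ∏ v : V, (1 + (-1 : ℝ) ^ ((F.filter fun e => v ∈ e).card)) := by
  have h1 : ∀ x : V → Bool,
      (∏ e ∈ F, ∏ v ∈ e, (if x v then (1 : ℝ) else -1))
        = ∏ v : V, (if x v then (1 : ℝ) else -1) ^ ((F.filter fun e => v ∈ e).card) := by
    intro x
    rw [Finset.prod_comm' (t' := Finset.univ) (s' := fun v => F.filter fun e => v ∈ e)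
      (fun e v => by simp [Finset.mem_filter, and_comm])]
    exact Finset.prod_congr rfl fun v _ => Finset.prod_const _
  simp_rw [h1]
  rw [← Fintype.piFinset_univ,
    ← Finset.prod_univ_sum (fun _ : V => (Finset.univ : Finset Bool))
      (fun v b => (if b then (1 : ℝ) else -1) ^ ((F.filter fun e => v ∈ e).card))]
  refine Finset.prod_congr rfl fun v _ => ?_
  rw [Fintype.sum_bool]
  simp

/-- Let `ℋ` be a connected `2`-regular linear `r`-graph.  Then every proper non-empty
subhypergraph has a vertex of odd degree; consequently, for the kernel
`U(x₁,…,x_r) = x₁⋯x_r` on `{-1,+1}^r` (encoded via `Bool`), `t_F(U) = 0` for every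
proper non-empty subgraph `F` while `t_ℋ(U) = 1`. -/
theorem stmt7 {V : Type} [Fintype V] [DecidableEq V] (r : ℕ) (hr : 2 ≤ r)
    (E : Finset (Finset V)) (hcard : ∀ e ∈ E, e.card = r)
    (hlin : ∀ e ∈ E, ∀ f ∈ E, e ≠ f → (e ∩ f).card ≤ 1)
    (hreg : ∀ v : V, (E.filter fun e => v ∈ e).card = 2)
    (hconn : (SimpleGraph.fromRel fun u v : V => ∃ e ∈ E, u ∈ e ∧ v ∈ e).Connected) :
    (∀ F ⊆ E, F.Nonempty → F ≠ E →
        ∃ v : V, Odd ((F.filter fun e => v ∈ e).card)) ∧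
    (∀ F ⊆ E, F.Nonempty → F ≠ E →
        (∑ x : V → Bool, ∏ e ∈ F, ∏ v ∈ e, (if x v then (1 : ℝ) else -1)) /
          2 ^ Fintype.card V = 0) ∧
    (∑ x : V → Bool, ∏ e ∈ E, ∏ v ∈ e, (if x v then (1 : ℝ) else -1)) /
      2 ^ Fintype.card V = 1 := by
  set G := SimpleGraph.fromRel fun u v : V => ∃ e ∈ E, u ∈ e ∧ v ∈ e with hG
  have part1 : ∀ F ⊆ E, F.Nonempty → F ≠ E →
      ∃ v : V, Odd ((F.filter fun e => v ∈ e).card) := by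
    intro F hFE hFne hFneq
    by_contra hodd
    push_neg at hodd
    -- all degrees even
    have heven : ∀ v : V, Even ((F.filter fun e => v ∈ e).card) := fun v =>
      Nat.not_odd_iff_even.1 (hodd v)
    have hdegle : ∀ v : V, (F.filter fun e => v ∈ e).card ≤ 2 := by
      intro v
      rw [← hreg v]
      exact Finset.card_le_card (Finset.filter_subset_filter _ hFE)
    -- saturation lemma
    have A : ∀ v : V, (∃ f ∈ F, v ∈ f) → ∀ e ∈ E, v ∈ e → e ∈ F := by
      rintro v ⟨f, hfF, hvf⟩ e heE hve
      have hpos : 0 < (F.filter fun e => v ∈ e).card :=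
        Finset.card_pos.2 ⟨f, Finset.mem_filter.2 ⟨hfF, hvf⟩⟩
      have h2 : (F.filter fun e => v ∈ e).card = 2 := by
        obtain ⟨k, hk⟩ := heven v
        have := hdegle v
        omega
      have hsub : (F.filter fun e => v ∈ e) ⊆ (E.filter fun e => v ∈ e) :=
        Finset.filter_subset_filter _ hFE
      have heq : (F.filter fun e => v ∈ e) = (E.filter fun e => v ∈ e) :=
        Finset.eq_of_subset_of_card_le hsub (by rw [hreg v, h2])
      have : e ∈ (F.filter fun e => v ∈ e) := by
        rw [heq]; exact Finset.mem_filter.2 ⟨heE, hve⟩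
      exact (Finset.mem_filter.1 this).1
    -- propagation along edges of G
    have step : ∀ {u w : V}, (∃ f ∈ F, u ∈ f) → G.Adj u w → (∃ f ∈ F, w ∈ f) := by
      intro u w hu hadj
      rw [hG, SimpleGraph.fromRel_adj] at hadj
      rcases hadj.2 with ⟨e, heE, hue, hwe⟩ | ⟨e, heE, hwe, hue⟩ <;>
        exact ⟨e, A u hu e heE hue, hwe⟩
    have walkprop : ∀ {a b : V} (p : G.Walk a b), (∃ f ∈ F, a ∈ f) → (∃ f ∈ F, b ∈ f) := by
      intro a b p
      induction p with
      | nil => exact id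
      | cons h p ih => exact fun ha => ih (step ha h)
    -- get a vertex in F and an edge of E outside F
    obtain ⟨f0, hf0⟩ := hFne
    obtain ⟨v0, hv0⟩ := Finset.card_pos.1 (by rw [hcard f0 (hFE hf0)]; omega)
    obtain ⟨e1, he1E, he1F⟩ : ∃ e ∈ E, e ∉ F := by
      by_contra hc
      push_neg at hc
      exact hFneq (Finset.Subset.antisymm hFE hc)
    obtain ⟨v1, hv1⟩ := Finset.card_pos.1 (by rw [hcard e1 he1E]; omega)
    obtain ⟨p⟩ := hconn v0 v1
    have hv1F : ∃ f ∈ F, v1 ∈ f := walkprop p ⟨f0, hf0, hv0⟩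
    exact he1F (A v1 hv1F e1 he1E hv1)
  refine ⟨part1, ?_, ?_⟩
  · intro F hFE hFne hFneq
    obtain ⟨v, hv⟩ := part1 F hFE hFne hFneq
    rw [sum_eval7]
    rw [Finset.prod_eq_zero (Finset.mem_univ v) (by rw [Odd.neg_one_pow hv]; ring)]
    simp
  · rw [sum_eval7]
    have : ∀ v : V, (1 + (-1 : ℝ) ^ ((E.filter fun e => v ∈ e).card)) = 2 := by
      intro v; rw [hreg v]; norm_num
    rw [Finset.prod_congr rfl fun v _ => this v, Finset.prod_const, Finset.card_univ]
    exact div_self (pow_ne_zero _ two_ne_zero)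
end

section
/- Let ℋ be an r-graph admitting an ordering e₁,…,e_m of its edges such that for each i, the family {e_i ∩ e_j : j < i} contains at most one set of size r-1. If 𝒯_n is the uniform random (r-1)-tournament on [n] and 𝒢(𝒯_n) the derived r-graph, then for any fixed injective map φ : V(ℋ) → [n], the probability that φ maps every edge of ℋ to an edge of 𝒢(𝒯_n) is exactly 2^{(1-r)m}. -/
open scoped Classical
open Finset

namespace S15

def val (b : Bool) : ℤ := if b then 1 else -1

def tgt (s : Bool) (k : ℕ) : Bool := xor s (k % 2 == 1)

lemma val_tgt (s : Bool) (k : ℕ) : val (tgt s k) = val s * (-1 : ℤ) ^ k := by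
  rcases Nat.even_or_odd k with h | h
  · have h2 : k % 2 = 0 := Nat.even_iff.1 h
    simp [tgt, val, h2, h.neg_one_pow]
  · have h2 : k % 2 = 1 := Nat.odd_iff.1 h
    cases s <;> simp [tgt, val, h2, h.neg_one_pow]

lemma val_inj : Function.Injective val := by
  intro a b h
  cases a <;> cases b <;> simp [val] at h ⊢ <;> omega

lemma tgt_tgt (s : Bool) (k : ℕ) : tgt (tgt s k) k = s := by
  cases h : (k % 2 == 1) <;> cases s <;> simp [tgt, h]

lemma tgt_ne (k : ℕ) : tgt true k ≠ tgt false k := by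
  cases h : (k % 2 == 1) <;> simp [tgt, h]

lemma sq1 (w : ℕ) : (-1 : ℤ) ^ w * (-1 : ℤ) ^ w = 1 := by
  rw [← pow_add]
  exact Even.neg_one_pow ⟨w, rfl⟩

lemma odd_sum_pow {x y : ℕ} (h : Odd (x + y)) : (-1 : ℤ) ^ x + (-1 : ℤ) ^ y = 0 := by
  rcases Nat.even_or_odd x with hx | hx
  · have hy : Odd y := by
      rw [Nat.odd_iff] at h ⊢; rw [Nat.even_iff] at hx; omega
    rw [hx.neg_one_pow, hy.neg_one_pow]; ring
  · have hy : Even y := by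
      rw [Nat.odd_iff] at h hx; rw [Nat.even_iff]; omega
    rw [hx.neg_one_pow, hy.neg_one_pow]; ring

variable {α : Type*} [LinearOrder α] [DecidableEq α]

lemma parity_aux {R : Finset α} {a b : α} (ha : a ∈ R) (hb : b ∈ R) (hab : a ≠ b) :
    Odd (((R.erase a).filter (fun w => b < w)).card + ((R.erase b).filter (fun w => a < w)).card
      + (R.filter (fun w => a < w)).card + (R.filter (fun w => b < w)).card) := by
  rw [filter_erase, filter_erase]
  rcases hab.lt_or_gt with h | h
  · -- a < b
    have h1 : a ∉ R.filter (fun w => b < w) := by simp [mem_filter]; intro _; exact h.le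
    have h2 : b ∈ R.filter (fun w => a < w) := mem_filter.2 ⟨hb, h⟩
    rw [erase_eq_of_notMem h1, card_erase_of_mem h2]
    have h3 : 1 ≤ (R.filter (fun w => a < w)).card := card_pos.2 ⟨b, h2⟩
    rw [Nat.odd_iff]; omega
  · -- b < a
    have h1 : b ∉ R.filter (fun w => a < w) := by simp [mem_filter]; intro _; exact h.le
    have h2 : a ∈ R.filter (fun w => b < w) := mem_filter.2 ⟨ha, h⟩
    rw [erase_eq_of_notMem h1, card_erase_of_mem h2]
    have h3 : 1 ≤ (R.filter (fun w => b < w)).card := card_pos.2 ⟨a, h2⟩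
    rw [Nat.odd_iff]; omega


def myE (r : ℕ) (R : Finset α) (σ : Finset α → Bool) : Prop :=
  ∀ S ⊆ R, S.card = r - 2 →
    (∑ T ∈ R.powerset.filter fun T => S ⊆ T ∧ T.card = r - 1,
      (if σ T then (1 : ℤ) else -1) *
        (-1 : ℤ) ^ (∑ v ∈ T \ S, (T.filter fun w => v < w).card)) = 0

lemma erase_ne_erase {R : Finset α} {a b : α} (ha : a ∈ R) (hb : b ∈ R) (hab : a ≠ b) :
    R.erase a ≠ R.erase b := by
  intro h
  have : b ∈ R.erase a := mem_erase.2 ⟨fun hh => hab hh.symm, hb⟩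
  rw [h] at this
  exact (mem_erase.1 this).1 rfl

lemma filter_pair_eq {r : ℕ} (hr : 3 ≤ r) {R : Finset α} (hR : R.card = r) {a b : α}
    (ha : a ∈ R) (hb : b ∈ R) (hab : a ≠ b) :
    (R.powerset.filter fun T => (R \ {a, b}) ⊆ T ∧ T.card = r - 1) = {R.erase a, R.erase b} := by
  ext T
  simp only [mem_filter, mem_powerset, mem_insert, mem_singleton]
  constructor
  · rintro ⟨hTR, hST, hTc⟩
    have hx : (R \ T).Nonempty := by
      rw [← card_pos, card_sdiff_of_subset hTR, hR, hTc]; omega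
    obtain ⟨x, hxmem⟩ := hx
    have hxR : x ∈ R := (mem_sdiff.1 hxmem).1
    have hxT : x ∉ T := (mem_sdiff.1 hxmem).2
    have hTe : T = R.erase x := by
      apply eq_of_subset_of_card_le (fun y hy => mem_erase.2 ⟨fun he => hxT (by rwa [he] at hy), hTR hy⟩)
      rw [card_erase_of_mem hxR, hR, hTc]
    have hxab : x = a ∨ x = b := by
      by_contra hcon
      push_neg at hcon
      exact hxT (hST (mem_sdiff.2 ⟨hxR, by simp [hcon.1, hcon.2]⟩))
    rcases hxab with rfl | rfl
    · exact Or.inl hTe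
    · exact Or.inr hTe
  · have hsub : ∀ c d : α, c ∈ R → c ≠ d → (R \ {c, d}) ⊆ R.erase c ∧ (R \ {d, c}) ⊆ R.erase c := by
      intro c d hc hcd
      constructor <;>
        · intro y hy
          rw [mem_sdiff] at hy
          simp only [mem_insert, mem_singleton] at hy
          push_neg at hy
          exact mem_erase.2 ⟨by tauto, hy.1⟩
    rintro (rfl | rfl)
    · exact ⟨erase_subset _ _, (hsub a b ha hab).1, by rw [card_erase_of_mem ha, hR]⟩
    · refine ⟨erase_subset _ _, ?_, by rw [card_erase_of_mem hb, hR]⟩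
      exact (hsub b a hb hab.symm).2

lemma erase_sdiff_pair {R : Finset α} {a b : α} (hb : b ∈ R) (hab : a ≠ b) :
    (R.erase a) \ (R \ {a, b}) = {b} := by
  ext x
  simp only [mem_sdiff, mem_erase, mem_singleton, mem_insert, not_and, not_not]
  constructor
  · rintro ⟨⟨hxa, hxR⟩, h2⟩
    rcases h2 hxR with h | h
    · exact absurd h hxa
    · exact h
  · rintro rfl
    exact ⟨⟨fun h => hab h.symm, hb⟩, fun _ => Or.inr rfl⟩

lemma erase_sdiff_pair' {R : Finset α} {a b : α} (ha : a ∈ R) (hab : a ≠ b) :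
    (R.erase b) \ (R \ {a, b}) = {a} := by
  rw [pair_comm a b]
  exact erase_sdiff_pair ha hab.symm

lemma sum_pair_eq {r : ℕ} (hr : 3 ≤ r) {R : Finset α} (hR : R.card = r) {a b : α}
    (ha : a ∈ R) (hb : b ∈ R) (hab : a ≠ b) (σ : Finset α → Bool) :
    (∑ T ∈ R.powerset.filter fun T => (R \ {a, b}) ⊆ T ∧ T.card = r - 1,
      (if σ T then (1 : ℤ) else -1) *
        (-1 : ℤ) ^ (∑ v ∈ T \ (R \ {a, b}), (T.filter fun w => v < w).card))
    = val (σ (R.erase a)) * (-1 : ℤ) ^ (((R.erase a).filter (fun w => b < w)).card)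
      + val (σ (R.erase b)) * (-1 : ℤ) ^ (((R.erase b).filter (fun w => a < w)).card) := by
  rw [filter_pair_eq hr hR ha hb hab,
    Finset.sum_pair (erase_ne_erase ha hb hab)]
  rw [erase_sdiff_pair hb hab, erase_sdiff_pair' ha hab]
  rw [sum_singleton, sum_singleton]
  rfl



lemma myE_iff_pairs {r : ℕ} (hr : 3 ≤ r) {R : Finset α} (hR : R.card = r) (σ : Finset α → Bool) :
    myE r R σ ↔ ∀ a ∈ R, ∀ b ∈ R, a ≠ b →
      val (σ (R.erase a)) * (-1 : ℤ) ^ (((R.erase a).filter (fun w => b < w)).card)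
        + val (σ (R.erase b)) * (-1 : ℤ) ^ (((R.erase b).filter (fun w => a < w)).card) = 0 := by
  constructor
  · intro h a ha b hb hab
    have hpairsub : ({a, b} : Finset α) ⊆ R := by
      intro x hx; rcases mem_insert.1 hx with rfl | hx
      · exact ha
      · rw [mem_singleton] at hx; exact hx ▸ hb
    have hScard : (R \ {a, b}).card = r - 2 := by
      rw [card_sdiff_of_subset hpairsub, hR, card_pair hab]
    have := h (R \ {a, b}) (sdiff_subset) hScard
    rwa [sum_pair_eq hr hR ha hb hab σ] at this
  · intro h S hS hScard
    have hRS : (R \ S).card = 2 := by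
      rw [card_sdiff_of_subset hS, hR, hScard]; omega
    obtain ⟨a, b, hab, hpair⟩ := card_eq_two.1 hRS
    have ha : a ∈ R := (mem_sdiff.1 (hpair ▸ mem_insert_self a {b})).1
    have hb : b ∈ R := (mem_sdiff.1 (hpair ▸ mem_insert_of_mem (mem_singleton_self b))).1
    have hSeq : S = R \ {a, b} := by
      rw [← hpair, sdiff_sdiff_self_left, inter_eq_right.2 hS]
    rw [hSeq, sum_pair_eq hr hR ha hb hab σ]
    exact h a ha b hb hab

def tgtOf (σ : Finset α → Bool) (R : Finset α) (a : α) : Bool :=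
  tgt (σ (R.erase a)) ((R.filter (fun w => a < w)).card)

lemma charE {r : ℕ} (hr : 3 ≤ r) {R : Finset α} (hR : R.card = r) (σ : Finset α → Bool) :
    myE r R σ ↔ ∃ s : Bool, ∀ a ∈ R, σ (R.erase a) = tgt s ((R.filter (fun w => a < w)).card) := by
  rw [myE_iff_pairs hr hR]
  constructor
  · intro h
    have hne : R.Nonempty := card_pos.1 (by omega)
    obtain ⟨a₀, ha₀⟩ := hne
    refine ⟨tgt (σ (R.erase a₀)) ((R.filter (fun w => a₀ < w)).card), ?_⟩
    intro a ha
    by_cases hcase : a = a₀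
    · subst hcase
      exact (tgt_tgt _ _).symm
    · have hrel := h a ha a₀ ha₀ hcase
      have hpar := parity_aux ha ha₀ hcase
      apply val_inj
      rw [val_tgt, val_tgt]
      set X := val (σ (R.erase a)) with hX
      set Y := val (σ (R.erase a₀)) with hY
      set u := (-1 : ℤ) ^ (((R.erase a).filter (fun w => a₀ < w)).card) with hu
      set v := (-1 : ℤ) ^ (((R.erase a₀).filter (fun w => a < w)).card) with hv
      set p := (-1 : ℤ) ^ ((R.filter (fun w => a < w)).card) with hp
      set q := (-1 : ℤ) ^ ((R.filter (fun w => a₀ < w)).card) with hq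
      have huu : u * u = 1 := sq1 _
      have hpp : p * p = 1 := sq1 _
      have hqq : q * q = 1 := sq1 _
      have hprod : u * v * p * q = -1 := by
        rw [hu, hv, hp, hq, ← pow_add, ← pow_add, ← pow_add]
        exact Odd.neg_one_pow hpar
      -- goal : X = Y * q * p
      have h1 : X * u = -(Y * v) := by linarith [hrel]
      have h2 : X = -(Y * v * u) := by
        calc X = X * (u * u) := by rw [huu, mul_one]
        _ = (X * u) * u := by ring
        _ = -(Y * v) * u := by rw [h1]
        _ = -(Y * v * u) := by ring
      have h3 : u * v = -(p * q) := by
        linear_combination p*q*hprod - u*v*p*p*hqq - u*v*hpp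
      rw [h2]
      linear_combination (-Y) * h3
  · rintro ⟨s, hs⟩ a ha b hb hab
    rw [hs a ha, hs b hb, val_tgt, val_tgt]
    have hpar := parity_aux ha hb hab
    have h0 : (-1 : ℤ) ^ ((R.filter (fun w => a < w)).card + ((R.erase a).filter (fun w => b < w)).card)
        + (-1 : ℤ) ^ ((R.filter (fun w => b < w)).card + ((R.erase b).filter (fun w => a < w)).card) = 0 := by
      apply odd_sum_pow
      rw [Nat.odd_iff] at hpar ⊢
      omega
    rw [pow_add, pow_add] at h0
    linear_combination val s * h0


section Count
variable {ι : Type*} [Fintype ι] [DecidableEq ι]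

lemma card_fiber (D' : Finset ι) (τ : ι → Bool) :
    (univ.filter fun σ : ι → Bool => ∀ T ∉ D', σ T = τ T).card = 2 ^ D'.card := by
  rw [← card_powerset]
  apply card_nbij' (i := fun σ => D'.filter (fun T => σ T))
    (j := fun A T => if T ∈ D' then decide (T ∈ A) else τ T)
  · intro σ _
    rw [mem_coe]
    simp [mem_powerset, filter_subset]
  · intro A hA
    rw [mem_coe]
    simp only [mem_filter, mem_univ, true_and]
    intro T hT
    simp [hT]
  · intro σ hσ
    rw [mem_coe] at hσ
    simp only [mem_filter, mem_univ, true_and] at hσ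
    funext T
    by_cases hT : T ∈ D'
    · simp [hT]
    · simp [hT, hσ T hT]
  · intro A hA
    rw [mem_coe, mem_powerset] at hA
    ext T
    simp only [mem_filter]
    constructor
    · rintro ⟨hT, h2⟩
      simpa [hT] using h2
    · intro hT
      exact ⟨hA hT, by simp [hA hT, hT]⟩

lemma bool_resolve {x a b : Bool} (hne : a ≠ b) : x = a ∨ x = b := by
  cases x <;> cases a <;> cases b <;> simp_all

lemma eq_of_apply_eq (u v : Bool) (F : Bool → Bool) (hF : F true ≠ F false) (h : F u = F v) :
    u = v := by
  cases u <;> cases v <;> simp_all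

lemma count_step (P Q : (ι → Bool) → Prop) (U Dst : Finset ι) (f : Bool → ι → Bool)
    (hPU : ∀ σ σ' : ι → Bool, (∀ T ∈ U, σ T = σ' T) → P σ → P σ')
    (hQ : ∀ σ, Q σ ↔ ∃ s : Bool, ∀ T ∈ Dst, σ T = f s T)
    (hf : ∀ T ∈ Dst, f true T ≠ f false T)
    (hover : (Dst ∩ U).card ≤ 1)
    (hD : Dst.Nonempty)
    (A B : Finset (ι → Bool))
    (hA : ∀ σ, σ ∈ A ↔ P σ) (hB : ∀ σ, σ ∈ B ↔ P σ ∧ Q σ) :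
    A.card = 2 ^ (Dst.card - 1) * B.card := by
  have hAeq : A = univ.filter (fun σ => P σ) := by
    ext σ; rw [mem_filter, hA σ]; simp
  have hBeq : B = univ.filter (fun σ => P σ ∧ Q σ) := by
    ext σ; rw [mem_filter, hB σ]; simp
  rw [hAeq, hBeq]
  set D' : Finset ι := Dst \ U with hD'
  set ρ : (ι → Bool) → (ι → Bool) := fun σ T => if T ∈ D' then false else σ T with hρ
  have hcardpos : 1 ≤ Dst.card := card_pos.2 hD
  have key : ∀ τ : ι → Bool,
      ((univ.filter fun σ : ι → Bool => P σ).filter fun σ => ρ σ = τ).card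
      = 2 ^ (Dst.card - 1) * ((univ.filter fun σ : ι → Bool => P σ ∧ Q σ).filter fun σ => ρ σ = τ).card := by
    intro τ
    rw [filter_filter, filter_filter]
    set g : Bool → (ι → Bool) := fun s T => if T ∈ D' then f s T else τ T with hg
    have hagree : ∀ σ : ι → Bool, ρ σ = τ → ∀ T ∈ U, σ T = τ T := by
      intro σ hστ T hT
      have hTD' : T ∉ D' := by simp [hD', hT]
      calc σ T = ρ σ T := by simp [hρ, hTD']
      _ = τ T := by rw [hστ]
    by_cases hτD : ∀ T ∈ D', τ T = false
    · by_cases hPτ : P τ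
      · -- main case
        have hL : (univ.filter fun σ : ι → Bool => P σ ∧ ρ σ = τ)
            = univ.filter fun σ : ι → Bool => ∀ T ∉ D', σ T = τ T := by
          apply filter_congr
          intro σ _
          constructor
          · rintro ⟨hPσ, hστ⟩ T hT
            calc σ T = ρ σ T := by simp [hρ, hT]
            _ = τ T := by rw [hστ]
          · intro hagr
            have hστ : ρ σ = τ := by
              funext T
              by_cases hTD : T ∈ D'
              · simp [hρ, hTD, hτD T hTD]
              · simp [hρ, hTD, hagr T hTD]
            exact ⟨hPU τ σ (fun T hT => ((hagree σ hστ T hT)).symm) hPτ, hστ⟩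
        have hR : (univ.filter fun σ : ι → Bool => (P σ ∧ Q σ) ∧ ρ σ = τ)
            = univ.filter fun σ : ι → Bool => Q σ ∧ ρ σ = τ := by
          apply filter_congr
          intro σ _
          constructor
          · rintro ⟨⟨_, hQσ⟩, hστ⟩; exact ⟨hQσ, hστ⟩
          · rintro ⟨hQσ, hστ⟩
            exact ⟨⟨hPU τ σ (fun T hT => (hagree σ hστ T hT).symm) hPτ, hQσ⟩, hστ⟩
        rw [hL, hR, card_fiber D' τ]
        -- g s is in the fiber
        have hgQ : ∀ s, ∀ T ∈ Dst, T ∈ D' → g s T = f s T := by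
          intro s T hTDst hTD'
          simp [hg, hTD']
        have hgρ : ∀ s : Bool, (∀ T ∈ Dst \ D', τ T = f s T) → (Q (g s) ∧ ρ (g s) = τ) := by
          intro s hs
          constructor
          · rw [hQ]
            refine ⟨s, fun T hT => ?_⟩
            by_cases hTD' : T ∈ D'
            · simp [hg, hTD']
            · have : T ∈ Dst \ D' := mem_sdiff.2 ⟨hT, hTD'⟩
              simp [hg, hTD', hs T this]
          · funext T
            by_cases hTD' : T ∈ D'
            · simp [hρ, hTD', (hτD T hTD').symm]
            · simp [hρ, hg, hTD']
        rcases Nat.le_one_iff_eq_zero_or_eq_one.1 hover with h0 | h1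
        · -- disjoint case : D' = Dst
          have hDD : D' = Dst := by
            rw [hD']
            exact Finset.sdiff_eq_self_iff_disjoint.2
              (Finset.disjoint_iff_inter_eq_empty.2 (card_eq_zero.1 h0))
          have hset : (univ.filter fun σ : ι → Bool => Q σ ∧ ρ σ = τ) = {g true, g false} := by
            ext σ
            simp only [mem_filter, mem_univ, true_and, mem_insert, mem_singleton]
            constructor
            · rintro ⟨hQσ, hστ⟩
              obtain ⟨s, hs⟩ := (hQ σ).1 hQσ
              have hσg : σ = g s := by
                funext T
                by_cases hTD' : T ∈ D'
                · rw [hgQ s T (hDD ▸ hTD') hTD']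
                  exact hs T (hDD ▸ hTD')
                · calc σ T = ρ σ T := by simp [hρ, hTD']
                  _ = τ T := by rw [hστ]
                  _ = g s T := by simp [hg, hTD']
              cases s
              · exact Or.inr hσg
              · exact Or.inl hσg
            · have hfib : ∀ s : Bool, Q (g s) ∧ ρ (g s) = τ := by
                intro s
                apply hgρ
                intro T hT
                rw [hDD] at hT
                exact absurd (mem_sdiff.1 hT).1 (mem_sdiff.1 hT).2
              rintro (rfl | rfl)
              · exact hfib true
              · exact hfib false
          rw [hset]
          obtain ⟨T1, hT1⟩ := hD
          have hgne : g true ≠ g false := by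
            intro hcon
            have := congrFun hcon T1
            rw [hgQ true T1 hT1 (hDD ▸ hT1), hgQ false T1 hT1 (hDD ▸ hT1)] at this
            exact hf T1 hT1 this
          rw [card_pair hgne, hDD]
          obtain ⟨d, hd⟩ : ∃ d, Dst.card = d + 1 := ⟨Dst.card - 1, by omega⟩
          rw [hd]
          simp [pow_succ]
        · -- overlap case : Dst ∩ U = {T₀}
          obtain ⟨T₀, hT₀⟩ := card_eq_one.1 h1
          have hT₀Dst : T₀ ∈ Dst := by
            have : T₀ ∈ Dst ∩ U := hT₀ ▸ mem_singleton_self T₀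
            exact (mem_inter.1 this).1
          have hT₀U : T₀ ∈ U := by
            have : T₀ ∈ Dst ∩ U := hT₀ ▸ mem_singleton_self T₀
            exact (mem_inter.1 this).2
          have hT₀D' : T₀ ∉ D' := by simp [hD', hT₀U]
          have hDstD' : Dst \ D' = {T₀} := by
            rw [hD', sdiff_sdiff_right_self]
            exact hT₀
          have hcardD' : D'.card = Dst.card - 1 := by
            have := card_sdiff_add_card_inter Dst U
            rw [← hD', hT₀, card_singleton] at this
            omega
          -- choose s₀
          obtain ⟨s₀, hs₀⟩ : ∃ s₀ : Bool, τ T₀ = f s₀ T₀ := by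
            rcases bool_resolve (x := τ T₀) (hf T₀ hT₀Dst) with h | h
            · exact ⟨true, h⟩
            · exact ⟨false, h⟩
          have huniq : ∀ s : Bool, f s T₀ = τ T₀ → s = s₀ := by
            intro s hs
            exact eq_of_apply_eq s s₀ (fun b => f b T₀) (hf T₀ hT₀Dst) (hs.trans hs₀)
          have hset : (univ.filter fun σ : ι → Bool => Q σ ∧ ρ σ = τ) = {g s₀} := by
            ext σ
            simp only [mem_filter, mem_univ, true_and, mem_singleton]
            constructor
            · rintro ⟨hQσ, hστ⟩
              obtain ⟨s, hs⟩ := (hQ σ).1 hQσ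
              have hσT₀ : σ T₀ = τ T₀ := by
                calc σ T₀ = ρ σ T₀ := by simp [hρ, hT₀D']
                _ = τ T₀ := by rw [hστ]
              have hss₀ : s = s₀ := huniq s (by rw [← hs T₀ hT₀Dst, hσT₀])
              subst hss₀
              funext T
              by_cases hTD' : T ∈ D'
              · rw [hgQ s T ((mem_sdiff.1 (hD' ▸ hTD')).1) hTD']
                exact hs T ((mem_sdiff.1 (hD' ▸ hTD')).1)
              · calc σ T = ρ σ T := by simp [hρ, hTD']
                _ = τ T := by rw [hστ]
                _ = g s T := by simp [hg, hTD']
            · rintro rfl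
              apply hgρ
              intro T hT
              rw [hDstD', mem_singleton] at hT
              subst hT
              exact hs₀
          rw [hset, card_singleton, hcardD', mul_one]
      · have e1 : (univ.filter fun σ : ι → Bool => P σ ∧ ρ σ = τ) = ∅ := by
          apply filter_eq_empty_iff.2
          rintro σ _ ⟨hPσ, hστ⟩
          exact hPτ (hPU σ τ (hagree σ hστ) hPσ)
        have e2 : (univ.filter fun σ : ι → Bool => (P σ ∧ Q σ) ∧ ρ σ = τ) = ∅ := by
          apply filter_eq_empty_iff.2
          rintro σ _ ⟨⟨hPσ, _⟩, hστ⟩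
          exact hPτ (hPU σ τ (hagree σ hστ) hPσ)
        rw [e1, e2]
        simp
    · push_neg at hτD
      obtain ⟨T₀, hT₀D, hT₀⟩ := hτD
      have e1 : (univ.filter fun σ : ι → Bool => P σ ∧ ρ σ = τ) = ∅ := by
        apply filter_eq_empty_iff.2
        rintro σ _ ⟨_, hστ⟩
        apply hT₀
        rw [← hστ]
        simp [hρ, hT₀D]
      have e2 : (univ.filter fun σ : ι → Bool => (P σ ∧ Q σ) ∧ ρ σ = τ) = ∅ := by
        apply filter_eq_empty_iff.2
        rintro σ _ ⟨_, hστ⟩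
        apply hT₀
        rw [← hστ]
        simp [hρ, hT₀D]
      rw [e1, e2]
      simp
  rw [card_eq_sum_card_fiberwise (f := ρ) (t := univ) (fun σ _ => mem_univ (ρ σ)),
    card_eq_sum_card_fiberwise (f := ρ) (t := univ) (fun σ _ => mem_univ (ρ σ)), mul_sum]
  exact sum_congr rfl fun τ _ => key τ

end Count

variable {V : Type} [DecidableEq V]

section GlueDefs

variable (n : ℕ) {m : ℕ} (ed : Fin m → Finset V) (φ : V → Fin n)

def Rf (i : Fin m) : Finset (Fin n) := (ed i).image φ

def Ds (i : Fin m) : Finset (Finset (Fin n)) := (Rf n ed φ i).image fun a => (Rf n ed φ i).erase a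

def Uk (k : ℕ) : Finset (Finset (Fin n)) :=
  (univ.filter fun i : Fin m => (i : ℕ) < k).biUnion (Ds n ed φ)

end GlueDefs

section Glue

variable {n r m : ℕ} {ed : Fin m → Finset V} {φ : V → Fin n}

lemma Rf_card (hφ : Function.Injective φ) (hcard : ∀ i, (ed i).card = r) (i : Fin m) :
    (Rf n ed φ i).card = r := by
  rw [Rf, card_image_of_injective _ hφ, hcard]

lemma mem_Ds_iff (i : Fin m) (T : Finset (Fin n)) :
    T ∈ Ds n ed φ i ↔ ∃ a ∈ Rf n ed φ i, T = (Rf n ed φ i).erase a := by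
  rw [Ds, mem_image]
  constructor
  · rintro ⟨a, ha, rfl⟩; exact ⟨a, ha, rfl⟩
  · rintro ⟨a, ha, rfl⟩; exact ⟨a, ha, rfl⟩

lemma mem_Ds_of_subset (hr : 3 ≤ r) (hφ : Function.Injective φ)
    (hcard : ∀ i, (ed i).card = r) (i : Fin m) {T : Finset (Fin n)}
    (hT : T ⊆ Rf n ed φ i) (hTc : T.card = r - 1) : T ∈ Ds n ed φ i := by
  have hRc : (Rf n ed φ i).card = r := Rf_card hφ hcard i
  have hx : (Rf n ed φ i \ T).Nonempty := by
    rw [← card_pos, card_sdiff_of_subset hT, hRc, hTc]; omega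
  obtain ⟨x, hxmem⟩ := hx
  have hxR : x ∈ Rf n ed φ i := (mem_sdiff.1 hxmem).1
  have hxT : x ∉ T := (mem_sdiff.1 hxmem).2
  have hTe : T = (Rf n ed φ i).erase x := by
    apply eq_of_subset_of_card_le (fun y hy => mem_erase.2 ⟨fun he => hxT (by rwa [he] at hy), hT hy⟩)
    rw [card_erase_of_mem hxR, hRc, hTc]
  exact (mem_Ds_iff i T).2 ⟨x, hxR, hTe⟩

lemma card_Ds (hr : 3 ≤ r) (hφ : Function.Injective φ) (hcard : ∀ i, (ed i).card = r)
    (i : Fin m) : (Ds n ed φ i).card = r := by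
  rw [Ds, card_image_of_injOn, Rf_card hφ hcard i]
  intro a ha b hb hab
  have hab' : (Rf n ed φ i).erase a = (Rf n ed φ i).erase b := hab
  by_contra hne
  rw [mem_coe] at ha
  have : a ∈ (Rf n ed φ i).erase b := mem_erase.2 ⟨hne, ha⟩
  rw [← hab'] at this
  exact (mem_erase.1 this).1 rfl

lemma Ds_nonempty (hr : 3 ≤ r) (hφ : Function.Injective φ) (hcard : ∀ i, (ed i).card = r)
    (i : Fin m) : (Ds n ed φ i).Nonempty := by
  rw [← card_pos, card_Ds hr hφ hcard i]; omega

/-- membership of T in some Ds j forces T to be the image of an (r-1)-intersection -/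
lemma overlap (hr : 3 ≤ r) (hφ : Function.Injective φ) (hinj : Function.Injective ed)
    (hcard : ∀ i, (ed i).card = r)
    (horder : ∀ i : Fin m,
      ((Finset.univ.filter fun j => j < i ∧ (ed i ∩ ed j).card = r - 1).image
        fun j => ed i ∩ ed j).card ≤ 1)
    (k : ℕ) (hk : k < m) :
    ((Ds n ed φ ⟨k, hk⟩) ∩ (Uk n ed φ k)).card ≤ 1 := by
  set i₀ : Fin m := ⟨k, hk⟩ with hi₀
  rw [card_le_one]
  have key : ∀ T ∈ (Ds n ed φ i₀) ∩ (Uk n ed φ k),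
      ∃ j : Fin m, j < i₀ ∧ (ed i₀ ∩ ed j).card = r - 1 ∧ T = (ed i₀ ∩ ed j).image φ := by
    intro T hT
    obtain ⟨hT1, hT2⟩ := mem_inter.1 hT
    obtain ⟨a, haR, rfl⟩ := (mem_Ds_iff i₀ T).1 hT1
    obtain ⟨j, hj, hTj⟩ := mem_biUnion.1 hT2
    have hjk : (j : ℕ) < k := (mem_filter.1 hj).2
    have hji₀ : j < i₀ := by
      rw [Fin.lt_def]; exact hjk
    have hjne : ed i₀ ≠ ed j := fun h => absurd (hinj h) (by
      intro hh; rw [hh] at hji₀; exact lt_irrefl _ hji₀)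
    obtain ⟨b, hbR, hTeq⟩ := (mem_Ds_iff j _).1 hTj
    set T := (Rf n ed φ i₀).erase a with hTt
    have hTsub : T ⊆ (ed i₀ ∩ ed j).image φ := by
      rw [image_inter _ _ hφ]
      intro x hx
      exact mem_inter.2 ⟨(erase_subset _ _) hx, by rw [hTeq] at hx; exact (erase_subset _ _) hx⟩
    have hTcard : T.card = r - 1 := by
      rw [hTt, card_erase_of_mem haR, Rf_card hφ hcard i₀]
    have hint_le : (ed i₀ ∩ ed j).card ≤ r - 1 := by
      have h1 : (ed i₀ ∩ ed j).card ≤ r := le_trans (card_le_card inter_subset_left) (hcard i₀).le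
      have h2 : (ed i₀ ∩ ed j).card ≠ r := by
        intro hceq
        have e1 : ed i₀ ∩ ed j = ed i₀ :=
          eq_of_subset_of_card_le inter_subset_left (by rw [hceq, hcard i₀])
        have e2 : ed i₀ ∩ ed j = ed j :=
          eq_of_subset_of_card_le inter_subset_right (by rw [hceq, hcard j])
        exact hjne (e1.symm.trans e2)
      omega
    have hint_ge : r - 1 ≤ (ed i₀ ∩ ed j).card := by
      have := card_le_card hTsub
      rwa [card_image_of_injective _ hφ, hTcard] at this
    have hint : (ed i₀ ∩ ed j).card = r - 1 := le_antisymm hint_le hint_ge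
    have hTeq2 : T = (ed i₀ ∩ ed j).image φ := by
      apply eq_of_subset_of_card_le hTsub
      rw [card_image_of_injective _ hφ, hint, hTcard]
    exact ⟨j, hji₀, hint, hTeq2⟩
  intro T₁ h₁ T₂ h₂
  obtain ⟨j₁, hj₁lt, hj₁c, hj₁e⟩ := key T₁ h₁
  obtain ⟨j₂, hj₂lt, hj₂c, hj₂e⟩ := key T₂ h₂
  have hmem1 : ed i₀ ∩ ed j₁ ∈ ((Finset.univ.filter fun j => j < i₀ ∧ (ed i₀ ∩ ed j).card = r - 1).image
      fun j => ed i₀ ∩ ed j) := mem_image_of_mem _ (mem_filter.2 ⟨mem_univ _, hj₁lt, hj₁c⟩)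
  have hmem2 : ed i₀ ∩ ed j₂ ∈ ((Finset.univ.filter fun j => j < i₀ ∧ (ed i₀ ∩ ed j).card = r - 1).image
      fun j => ed i₀ ∩ ed j) := mem_image_of_mem _ (mem_filter.2 ⟨mem_univ _, hj₂lt, hj₂c⟩)
  have := card_le_one.1 (horder i₀) _ hmem1 _ hmem2
  rw [hj₁e, hj₂e, this]

end Glue

section Main

variable {V : Type} [DecidableEq V]
variable {n r m : ℕ} {ed : Fin m → Finset V} {φ : V → Fin n}

lemma myE_congr {R : Finset (Fin n)} {σ σ' : Finset (Fin n) → Bool}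
    (h : ∀ T, T ⊆ R → T.card = r - 1 → σ T = σ' T) (hE : myE r R σ) : myE r R σ' := by
  intro S hS hSc
  have hsum := hE S hS hSc
  rw [← hsum]
  apply sum_congr rfl
  intro T hT
  rw [mem_filter] at hT
  rw [h T (mem_powerset.1 hT.1) hT.2.2]

lemma charE_Ds (hr : 3 ≤ r) (hφ : Function.Injective φ) (hcard : ∀ i, (ed i).card = r)
    (i : Fin m) (σ : Finset (Fin n) → Bool) :
    myE r (Rf n ed φ i) σ ↔ ∃ s : Bool, ∀ T ∈ Ds n ed φ i,
      σ T = tgt s (∑ v ∈ (Rf n ed φ i) \ T, ((Rf n ed φ i).filter fun w => v < w).card) := by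
  rw [charE hr (Rf_card hφ hcard i)]
  constructor
  · rintro ⟨s, hs⟩
    refine ⟨s, fun T hT => ?_⟩
    obtain ⟨a, ha, rfl⟩ := (mem_Ds_iff i T).1 hT
    rw [sdiff_erase_self ha, sum_singleton]
    exact hs a ha
  · rintro ⟨s, hs⟩
    refine ⟨s, fun a ha => ?_⟩
    have := hs _ ((mem_Ds_iff i _).2 ⟨a, ha, rfl⟩)
    rwa [sdiff_erase_self ha, sum_singleton] at this

lemma pred_congr (hr : 3 ≤ r) (hφ : Function.Injective φ) (hcard : ∀ i, (ed i).card = r)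
    (k : ℕ) (σ σ' : Finset (Fin n) → Bool)
    (hagree : ∀ T ∈ Uk n ed φ k, σ T = σ' T)
    (h : ∀ i : Fin m, (i : ℕ) < k → myE r (Rf n ed φ i) σ) :
    ∀ i : Fin m, (i : ℕ) < k → myE r (Rf n ed φ i) σ' := by
  intro i hi
  apply myE_congr (σ := σ) ?_ (h i hi)
  intro T hTs hTc
  apply hagree
  exact mem_biUnion.2 ⟨i, mem_filter.2 ⟨mem_univ _, hi⟩, mem_Ds_of_subset hr hφ hcard i hTs hTc⟩

lemma main_count (hr : 3 ≤ r) (hφ : Function.Injective φ) (hinj : Function.Injective ed)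
    (hcard : ∀ i, (ed i).card = r)
    (horder : ∀ i : Fin m,
      ((Finset.univ.filter fun j => j < i ∧ (ed i ∩ ed j).card = r - 1).image
        fun j => ed i ∩ ed j).card ≤ 1) :
    ∀ k, k ≤ m →
      (univ.filter fun σ : Finset (Fin n) → Bool =>
          ∀ i : Fin m, (i : ℕ) < k → myE r (Rf n ed φ i) σ).card * 2 ^ ((r - 1) * k)
        = 2 ^ (Fintype.card (Finset (Fin n))) := by
  intro k
  induction k with
  | zero =>
    intro _
    have he : (univ.filter fun σ : Finset (Fin n) → Bool =>
        ∀ i : Fin m, (i : ℕ) < 0 → myE r (Rf n ed φ i) σ) = univ :=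
      filter_true_of_mem (fun σ _ i hi => absurd hi (Nat.not_lt_zero _))
    rw [he, card_univ, Fintype.card_fun, Fintype.card_bool]
    simp

  | succ k ih =>
    intro hk1
    have hk : k < m := hk1
    set i₀ : Fin m := ⟨k, hk⟩ with hi₀
    have hstep := count_step (ι := Finset (Fin n))
      (fun σ => ∀ i : Fin m, (i : ℕ) < k → myE r (Rf n ed φ i) σ)
      (myE r (Rf n ed φ i₀))
      (Uk n ed φ k) (Ds n ed φ i₀)
      (fun s T => tgt s (∑ v ∈ (Rf n ed φ i₀) \ T, ((Rf n ed φ i₀).filter fun w => v < w).card))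
      (fun σ σ' hag => pred_congr hr hφ hcard k σ σ' hag)
      (fun σ => charE_Ds hr hφ hcard i₀ σ)
      (fun T _ => tgt_ne _)
      (overlap hr hφ hinj hcard horder k hk)
      (Ds_nonempty hr hφ hcard i₀)
      (univ.filter fun σ : Finset (Fin n) → Bool =>
          ∀ i : Fin m, (i : ℕ) < k → myE r (Rf n ed φ i) σ)
      (univ.filter (fun σ : Finset (Fin n) → Bool =>
          (∀ i : Fin m, (i : ℕ) < k → myE r (Rf n ed φ i) σ) ∧ myE r (Rf n ed φ i₀) σ))
      (fun σ => by rw [mem_filter]; simp)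
      (fun σ => by rw [mem_filter]; simp)
    rw [card_Ds hr hφ hcard i₀] at hstep
    have hsucc : (univ.filter fun σ : Finset (Fin n) → Bool =>
          ∀ i : Fin m, (i : ℕ) < k + 1 → myE r (Rf n ed φ i) σ)
        = univ.filter (fun σ : Finset (Fin n) → Bool =>
            (∀ i : Fin m, (i : ℕ) < k → myE r (Rf n ed φ i) σ) ∧ myE r (Rf n ed φ i₀) σ) := by
      apply filter_congr
      intro σ _
      constructor
      · intro h
        exact ⟨fun i hi => h i (by omega), h i₀ (Nat.lt_succ_self k)⟩
      · rintro ⟨h1, h2⟩ i hi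
        rcases Nat.lt_succ_iff_lt_or_eq.1 hi with h | h
        · exact h1 i h
        · have hii : i = i₀ := Fin.ext h
          rw [hii]; exact h2
    rw [hsucc]
    have harith : (r - 1) * (k + 1) = (r - 1) * k + (r - 1) := by ring
    rw [harith, pow_add, ← ih (by omega), hstep]
    ring

end Main
end S15

/-- Let `ℋ` be an `r`-graph with edges `ed 0, …, ed (m-1)` such that for each `i` the
family `{ed i ∩ ed j : j < i}` contains at most one set of size `r-1`.  For an
injective map `φ` of the vertices into `[n]`, the probability (over the uniform random
`(r-1)`-tournament on `[n]`) that `φ` maps every edge of `ℋ` to an edge of the derived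
`r`-graph is exactly `2^{(1-r)m}`. -/
theorem stmt15 {V : Type} [DecidableEq V] (n r m : ℕ) (hr : 3 ≤ r)
    (ed : Fin m → Finset V) (hinj : Function.Injective ed)
    (hcard : ∀ i, (ed i).card = r)
    (horder : ∀ i : Fin m,
      ((Finset.univ.filter fun j => j < i ∧ (ed i ∩ ed j).card = r - 1).image
        fun j => ed i ∩ ed j).card ≤ 1)
    (φ : V → Fin n) (hφ : Function.Injective φ) :
    ((Finset.univ.filter fun σ : Finset (Fin n) → Bool =>
        ∀ i : Fin m, ∀ S ⊆ (ed i).image φ, S.card = r - 2 →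
          (∑ T ∈ ((ed i).image φ).powerset.filter fun T => S ⊆ T ∧ T.card = r - 1,
            (if σ T then (1 : ℤ) else -1) *
              (-1 : ℤ) ^ (∑ v ∈ T \ S, (T.filter fun w => v < w).card)) = 0).card : ℝ)
      / 2 ^ Fintype.card (Finset (Fin n)) = (2 : ℝ) ^ ((1 - (r : ℤ)) * m) := by
  have hmain := S15.main_count (n := n) (φ := φ) hr hφ hinj hcard horder m le_rfl
  have hfeq : (Finset.univ.filter fun σ : Finset (Fin n) → Bool =>
        ∀ i : Fin m, ∀ S ⊆ (ed i).image φ, S.card = r - 2 →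
          (∑ T ∈ ((ed i).image φ).powerset.filter fun T => S ⊆ T ∧ T.card = r - 1,
            (if σ T then (1 : ℤ) else -1) *
              (-1 : ℤ) ^ (∑ v ∈ T \ S, (T.filter fun w => v < w).card)) = 0)
      = (Finset.univ.filter fun σ : Finset (Fin n) → Bool =>
          ∀ i : Fin m, (i : ℕ) < m → S15.myE r (S15.Rf n ed φ i) σ) := by
    apply Finset.filter_congr
    intro σ _
    constructor
    · intro h i _
      exact h i
    · intro h i
      exact h i i.isLt
  rw [hfeq]
  have hcast : ((Finset.univ.filter fun σ : Finset (Fin n) → Bool =>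
        ∀ i : Fin m, (i : ℕ) < m → S15.myE r (S15.Rf n ed φ i) σ).card : ℝ)
      * 2 ^ ((r - 1) * m) = 2 ^ Fintype.card (Finset (Fin n)) := by
    exact_mod_cast hmain
  have hKi : (((r - 1) * m : ℕ) : ℤ) = ((r : ℤ) - 1) * m := by
    have h1 : ((r - 1 : ℕ) : ℤ) = (r : ℤ) - 1 := by omega
    rw [Nat.cast_mul, h1]
  have hexp : (1 - (r : ℤ)) * m = -(((r - 1) * m : ℕ) : ℤ) := by rw [hKi]; ring
  rw [hexp, zpow_neg, zpow_natCast]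
  rw [div_eq_iff (by positivity : ((2 : ℝ) ^ Fintype.card (Finset (Fin n))) ≠ 0)]
  have h2K : ((2 : ℝ) ^ ((r - 1) * m)) ≠ 0 := by positivity
  rw [inv_mul_eq_div, eq_div_iff h2K]
  exact hcast
end
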